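/- arXiv:1911.06691 — 7 statements merged into one kernel-verified Lean document; each statement's English description precedes it below -/
import Mathlib

section
/- Let Γ, α, ν, u₀, e₀ > 0, let c = (c₁,c₂) ∈ ℝ², let x* ∈ (0,1], and let (u,e) : [0,x*) → ℝ² be a solution of the profile ODE with u > 0 and e > 0 on [0,x*). Then u and e are bounded on [0,x*) by a constant depending only on Γ, α, ν, u₀, e₀, c₁, c₂ (in particular independent of x*), and the limits lim_{x→x*⁻} u(x) and lim_{x→x*⁻} e(x) exist, so that (u,e) extends to a continuous function on the closed interval [0,x*]. -/
/-!
Writing `A = u₀/α`, `B = u₀/ν`: since `-c₁u - u²/2 ≤ c₁²/2`, the `e`-equation gives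
`e' ≤ B e + B (|c₂| + c₁²/2)`, so Grönwall bounds `e` on `[0, 1]` without any information on `u`.
For `u > 0` the `u`-equation gives `(u²)' = 2A (c₁u + u² + Γe) ≤ 3A u² + A (c₁² + 2Γ sup e)`,
so Grönwall bounds `u²` as well. Finally `u' ≥ -A|c₁|` and, `u` being bounded, `e'` is bounded
below; a bounded function whose derivative is bounded below is a monotone function plus a linear
one, hence has a limit at the right endpoint.
-/

open Set Filter Topology

noncomputable section

/-- `(u, e)` solves the profile ODE
`u′ = (u₀/α)(c₁ + u + Γ e/u)`, `e′ = (u₀/ν)(c₂ − c₁ u − u²/2 + e)`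
on the set `S`, with initial data `u 0 = u₀`, `e 0 = e₀`. -/
def IsProfileSol (Γ α ν u₀ e₀ : ℝ) (c : ℝ × ℝ) (u e : ℝ → ℝ) (S : Set ℝ) : Prop :=
  u 0 = u₀ ∧ e 0 = e₀ ∧
  ∀ x ∈ S,
    HasDerivWithinAt u ((u₀ / α) * (c.1 + u x + Γ * e x / u x)) S x ∧
    HasDerivWithinAt e ((u₀ / ν) * (c.2 - c.1 * u x - (u x) ^ 2 / 2 + e x)) S x

/-- The feasible set 𝒞: the set of constants of integration `c` for which the solution of
the profile ODE is defined on `[0,1]` with `u > 0` and `e > 0` on `[0,1]`. -/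
def Feasible (Γ α ν u₀ e₀ : ℝ) : Set (ℝ × ℝ) :=
  {c | ∃ u e : ℝ → ℝ,
    IsProfileSol Γ α ν u₀ e₀ c u e (Set.Icc 0 1) ∧
    ∀ x ∈ Set.Icc (0:ℝ) 1, 0 < u x ∧ 0 < e x}

section Extension

variable {f f' : ℝ → ℝ} {a b : ℝ}

theorem le_gronwallBound_of_hasDerivWithinAt_Ico {δ K ε : ℝ}
    (hf : ∀ x ∈ Ico a b, HasDerivWithinAt f (f' x) (Ico a b) x) (ha : f a ≤ δ)
    (bound : ∀ x ∈ Ico a b, f' x ≤ K * f x + ε) :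
    ∀ x ∈ Ico a b, f x ≤ gronwallBound δ K ε (x - a) := by
  intro x hx
  have hsub : Icc a x ⊆ Ico a b := Icc_subset_Ico_right hx.2
  refine le_gronwallBound_of_liminf_deriv_right_le
    (fun y hy => (hf y (hsub hy)).continuousWithinAt.mono hsub) (fun y hy r hr => ?_) ha
    (fun y hy => bound y (hsub (Ico_subset_Icc_self hy))) x (right_mem_Icc.2 hx.1)
  have hy' : y ∈ Ico a b := hsub (Ico_subset_Icc_self hy)
  have hIci : HasDerivWithinAt f (f' y) (Ici y) y :=
    (hf y hy').mono_of_mem_nhdsWithin <|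
      mem_of_superset (Ico_mem_nhdsGE hy'.2) (Ico_subset_Ico_left hy'.1)
  exact (hIci.liminf_right_slope_le hr).mono fun z hz => by
    rwa [slope_def_field, div_eq_inv_mul] at hz

theorem exists_tendsto_nhdsLT_of_hasDerivWithinAt_ge (hab : a < b) {L : ℝ}
    (hf : ∀ x ∈ Ico a b, HasDerivWithinAt f (f' x) (Ico a b) x)
    (hf' : ∀ x ∈ Ico a b, -L ≤ f' x) (hbdd : BddAbove (f '' Ico a b)) :
    ∃ ℓ, Tendsto f (𝓝[<] b) (𝓝 ℓ) := by
  set g : ℝ → ℝ := fun x => f x + L * x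
  have hg : ∀ x ∈ Ico a b, HasDerivWithinAt g (f' x + L * 1) (Ico a b) x :=
    fun x hx => (hf x hx).add ((hasDerivWithinAt_id x _).const_mul L)
  have hmono : MonotoneOn g (Ico a b) := by
    refine monotoneOn_of_hasDerivWithinAt_nonneg (f' := fun x => f' x + L * 1) (convex_Ico a b)
      (fun x hx => (hg x hx).continuousWithinAt) (fun x hx => ?_) (fun x hx => ?_)
    all_goals rw [interior_Ico] at hx
    · exact (hg x (Ioo_subset_Ico_self hx)).mono interior_subset
    · linarith [hf' x (Ioo_subset_Ico_self hx)]
  have hgbdd : BddAbove (g '' Ioo a b) := by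
    obtain ⟨M, hM⟩ := hbdd
    refine ⟨M + |L| * max |a| |b|, forall_mem_image.2 fun x hx => ?_⟩
    have hfx : f x ≤ M := hM (mem_image_of_mem f (Ioo_subset_Ico_self hx))
    have hLx : L * x ≤ |L| * max |a| |b| :=
      (le_abs_self _).trans <| by
        rw [abs_mul]
        exact mul_le_mul_of_nonneg_left (abs_le_max_abs_abs hx.1.le hx.2.le) (abs_nonneg L)
    exact add_le_add hfx hLx
  have hlim := (hmono.mono Ioo_subset_Ico_self).tendsto_nhdsWithin_Ioo_left
    (nonempty_Ioo.2 hab) hgbdd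
  refine ⟨_, (hlim.sub (((continuous_const_mul L).tendsto b).mono_left nhdsWithin_le_nhds)).congr
    fun x => ?_⟩
  simp [g]

theorem exists_continuousOn_Icc_eqOn_of_tendsto_nhdsLT {ℓ : ℝ} (hf : ContinuousOn f (Ico a b))
    (hℓ : Tendsto f (𝓝[<] b) (𝓝 ℓ)) :
    ∃ F : ℝ → ℝ, ContinuousOn F (Icc a b) ∧ EqOn F f (Ico a b) := by
  classical
  refine ⟨Function.update f b ℓ, ?_, fun x hx => Function.update_of_ne hx.2.ne _ _⟩
  rw [continuousOn_update_iff, Icc_sdiff_right]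
  exact ⟨hf, fun _ => hℓ.mono_left (nhdsWithin_mono _ fun x hx => hx.2)⟩

theorem exists_continuousOn_Icc_eqOn_of_hasDerivWithinAt_ge (hab : a < b) {L : ℝ}
    (hf : ∀ x ∈ Ico a b, HasDerivWithinAt f (f' x) (Ico a b) x)
    (hf' : ∀ x ∈ Ico a b, -L ≤ f' x) (hbdd : BddAbove (f '' Ico a b)) :
    ∃ F : ℝ → ℝ, ContinuousOn F (Icc a b) ∧ EqOn F f (Ico a b) :=
  have ⟨_, hℓ⟩ := exists_tendsto_nhdsLT_of_hasDerivWithinAt_ge hab hf hf' hbdd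
  exists_continuousOn_Icc_eqOn_of_tendsto_nhdsLT (fun x hx => (hf x hx).continuousWithinAt) hℓ

end Extension

def profileEBound (ν u₀ e₀ : ℝ) (c : ℝ × ℝ) : ℝ :=
  gronwallBound e₀ (u₀ / ν) (u₀ / ν * (|c.2| + c.1 ^ 2 / 2)) 1

def profileUSqBound (Γ α ν u₀ e₀ : ℝ) (c : ℝ × ℝ) : ℝ :=
  gronwallBound (u₀ ^ 2) (3 * (u₀ / α)) (u₀ / α * (c.1 ^ 2 + 2 * Γ * profileEBound ν u₀ e₀ c)) 1

theorem profileEBound_pos {ν u₀ e₀ : ℝ} (c : ℝ × ℝ) (hν : 0 < ν) (hu₀ : 0 < u₀) (he₀ : 0 < e₀) :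
    0 < profileEBound ν u₀ e₀ c :=
  calc 0 < e₀ := he₀
    _ = gronwallBound e₀ (u₀ / ν) (u₀ / ν * (|c.2| + c.1 ^ 2 / 2)) 0 := (gronwallBound_x0 ..).symm
    _ ≤ profileEBound ν u₀ e₀ c :=
        gronwallBound_mono he₀.le (by positivity) (by positivity) zero_le_one

theorem profile_u_rhs_ge {A Γ c₁ u e : ℝ} (hA : 0 ≤ A) (hΓ : 0 ≤ Γ) (hu : 0 < u) (he : 0 ≤ e) :
    -(A * |c₁|) ≤ A * (c₁ + u + Γ * e / u) := by
  rw [← mul_neg]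
  have : 0 ≤ Γ * e / u := by positivity
  exact mul_le_mul_of_nonneg_left (by linarith [neg_abs_le c₁]) hA

theorem profile_e_rhs_ge {B c₁ c₂ u e M : ℝ} (hB : 0 ≤ B) (hu : |u| ≤ M) (he : 0 ≤ e) :
    -(B * (|c₂| + |c₁| * M + M ^ 2 / 2)) ≤ B * (c₂ - c₁ * u - u ^ 2 / 2 + e) := by
  rw [← mul_neg]
  have hcu : c₁ * u ≤ |c₁| * M := calc
    c₁ * u ≤ |c₁| * |u| := abs_mul c₁ u ▸ le_abs_self _
    _ ≤ |c₁| * M := mul_le_mul_of_nonneg_left hu (abs_nonneg _)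
  have husq : u ^ 2 ≤ M ^ 2 := by nlinarith [abs_nonneg u, sq_abs u]
  exact mul_le_mul_of_nonneg_left (by linarith [neg_abs_le c₂]) hB

namespace IsProfileSol

variable {Γ α ν u₀ e₀ : ℝ} {c : ℝ × ℝ} {u e : ℝ → ℝ} {xs : ℝ}

theorem e_le_profileEBound (h : IsProfileSol Γ α ν u₀ e₀ c u e (Ico 0 xs)) (hxs : xs ≤ 1)
    (hν : 0 < ν) (hu₀ : 0 < u₀) (he₀ : 0 < e₀) :
    ∀ x ∈ Ico 0 xs, e x ≤ profileEBound ν u₀ e₀ c := by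
  have hB : 0 < u₀ / ν := div_pos hu₀ hν
  intro x hx
  calc e x ≤ gronwallBound e₀ (u₀ / ν) (u₀ / ν * (|c.2| + c.1 ^ 2 / 2)) (x - 0) :=
        le_gronwallBound_of_hasDerivWithinAt_Ico (fun y hy => (h.2.2 y hy).2) h.2.1.le
          (fun y _ => by nlinarith [sq_nonneg (u y + c.1), le_abs_self c.2]) x hx
    _ ≤ profileEBound ν u₀ e₀ c :=
        gronwallBound_mono he₀.le (by positivity) hB.le (by linarith [hx.2])

theorem sq_u_le_profileUSqBound (h : IsProfileSol Γ α ν u₀ e₀ c u e (Ico 0 xs)) (hxs : xs ≤ 1)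
    (hΓ : 0 < Γ) (hα : 0 < α) (hν : 0 < ν) (hu₀ : 0 < u₀) (he₀ : 0 < e₀)
    (hu : ∀ x ∈ Ico 0 xs, u x ≠ 0) :
    ∀ x ∈ Ico 0 xs, u x ^ 2 ≤ profileUSqBound Γ α ν u₀ e₀ c := by
  have hA : 0 < u₀ / α := div_pos hu₀ hα
  have he := h.e_le_profileEBound hxs hν hu₀ he₀
  have hE := profileEBound_pos c hν hu₀ he₀
  intro x hx
  calc u x ^ 2 ≤ gronwallBound (u₀ ^ 2) (3 * (u₀ / α))
        (u₀ / α * (c.1 ^ 2 + 2 * Γ * profileEBound ν u₀ e₀ c)) (x - 0) := by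
        refine le_gronwallBound_of_hasDerivWithinAt_Ico (f := fun y => u y ^ 2)
          (fun y hy => (h.2.2 y hy).1.pow 2) (by rw [h.1]) (fun y hy => ?_) x hx
        have hderiv : (2 : ℕ) * u y ^ (2 - 1) * (u₀ / α * (c.1 + u y + Γ * e y / u y)) =
            2 * (u₀ / α) * (c.1 * u y + u y ^ 2 + Γ * e y) := by
          field_simp [hu y hy]
          ring
        rw [hderiv]
        nlinarith [sq_nonneg (u y - c.1), mul_le_mul_of_nonneg_left (he y hy) hΓ.le]
    _ ≤ profileUSqBound Γ α ν u₀ e₀ c :=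
        gronwallBound_mono (sq_nonneg _) (by positivity) (by positivity) (by linarith [hx.2])

end IsProfileSol

/-- Lemma small(i): if `e > 0` on `[0, x*)` then `(u,e)` is bounded on `[0,x*)` uniformly in
`x* ∈ (0,1]`, and `(u,e)` extends continuously to the closed interval `[0,x*]`. -/
theorem stmt0 (Γ α ν u₀ e₀ : ℝ) (hΓ : 0 < Γ) (hα : 0 < α) (hν : 0 < ν)
    (hu₀ : 0 < u₀) (he₀ : 0 < e₀) (c : ℝ × ℝ) :
    ∃ M : ℝ, ∀ xs : ℝ, xs ∈ Set.Ioc (0:ℝ) 1 →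
      ∀ u e : ℝ → ℝ,
        IsProfileSol Γ α ν u₀ e₀ c u e (Set.Ico 0 xs) →
        (∀ x ∈ Set.Ico (0:ℝ) xs, 0 < u x ∧ 0 < e x) →
        (∀ x ∈ Set.Ico (0:ℝ) xs, |u x| ≤ M ∧ |e x| ≤ M) ∧
        ∃ U E : ℝ → ℝ, ContinuousOn U (Set.Icc 0 xs) ∧ ContinuousOn E (Set.Icc 0 xs) ∧
          ∀ x ∈ Set.Ico (0:ℝ) xs, U x = u x ∧ E x = e x := by
  set M := max √(profileUSqBound Γ α ν u₀ e₀ c) (profileEBound ν u₀ e₀ c)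
  refine ⟨M, fun xs hxs u e h hpos => ?_⟩
  have he := h.e_le_profileEBound hxs.2 hν hu₀ he₀
  have hu := h.sq_u_le_profileUSqBound hxs.2 hΓ hα hν hu₀ he₀ fun x hx => (hpos x hx).1.ne'
  have hbound : ∀ x ∈ Ico 0 xs, |u x| ≤ M ∧ |e x| ≤ M := fun x hx =>
    ⟨(Real.abs_le_sqrt (hu x hx)).trans (le_max_left _ _),
      (abs_of_pos (hpos x hx).2).trans_le ((he x hx).trans (le_max_right _ _))⟩
  obtain ⟨U, hUc, hU⟩ := exists_continuousOn_Icc_eqOn_of_hasDerivWithinAt_ge hxs.1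
    (fun x hx => (h.2.2 x hx).1)
    (fun x hx => profile_u_rhs_ge (div_pos hu₀ hα).le hΓ.le (hpos x hx).1 (hpos x hx).2.le)
    ⟨M, forall_mem_image.2 fun x hx => (le_abs_self _).trans (hbound x hx).1⟩
  obtain ⟨E, hEc, hE⟩ := exists_continuousOn_Icc_eqOn_of_hasDerivWithinAt_ge hxs.1
    (fun x hx => (h.2.2 x hx).2)
    (fun x hx => profile_e_rhs_ge (div_pos hu₀ hν).le (hbound x hx).1 (hpos x hx).2.le)
    ⟨M, forall_mem_image.2 fun x hx => (le_abs_self _).trans (hbound x hx).2⟩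
  exact ⟨hbound, U, E, hUc, hEc, fun x hx => ⟨hU hx, hE hx⟩⟩
end
end

section
/- Let Γ, α, ν, u₀, e₀ > 0, let c = (c₁,c₂) ∈ ℝ², let x* ∈ (0,1], and let (u,e) : [0,x*) → ℝ² be a solution of the profile ODE with u > 0 on [0,x*). If there exists a constant ẽ > 0 such that e(x) ≥ ẽ for all x ∈ [0,x*), then there exists a constant ũ > 0 such that u(x) > ũ for all x ∈ [0,x*). -/
noncomputable section

/-! While `e ≥ ẽ`, the term `Γ e / u` dominates `c₁ + u` as soon as `u ≤ Γ ẽ / (|c₁| + 1)`, so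
`u′ > 0` whenever `u` reaches the level `m = min u₀ (Γ ẽ / (|c₁| + 1))`. Starting at `u₀ ≥ m`, the
solution can therefore never cross below `m`. -/

open Set

theorem le_image_Ico_of_deriv_pos_of_eq {f f' : ℝ → ℝ} {a b m : ℝ}
    (hf : ∀ x ∈ Ico a b, HasDerivWithinAt f (f' x) (Ico a b) x)
    (ha : m ≤ f a) (hm : ∀ x ∈ Ico a b, f x = m → 0 < f' x) :
    ∀ x ∈ Ico a b, m ≤ f x := by
  intro x hx
  have hsub : Icc a x ⊆ Ico a b := Icc_subset_Ico_right hx.2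
  refine image_le_of_deriv_right_lt_deriv_boundary' (f := fun _ => m) (f' := fun _ => 0)
    continuousOn_const (fun _ _ => hasDerivWithinAt_const _ _ _) ha
    (fun y hy => (hf y (hsub hy)).continuousWithinAt.mono hsub)
    (fun y hy => (hf y (hsub (Ico_subset_Icc_self hy))).mono_of_mem_nhdsWithin ?_)
    (fun y hy hyf => hm y (hsub (Ico_subset_Icc_self hy)) hyf.symm) ⟨hx.1, le_rfl⟩
  exact Filter.mem_of_superset (Ico_mem_nhdsGE (hy.2.trans_le hx.2.le))
    (Ico_subset_Ico_left hy.1)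

theorem add_add_mul_div_pos {c₁ Γ ε u e : ℝ} (hΓ : 0 ≤ Γ) (hu : 0 < u)
    (hu_le : u ≤ Γ * ε / (|c₁| + 1)) (he : ε ≤ e) :
    0 < c₁ + u + Γ * e / u := by
  have hu_mul : u * (|c₁| + 1) ≤ Γ * e := by
    rw [le_div_iff₀ (by positivity)] at hu_le
    nlinarith
  have hc : |c₁| < Γ * e / u := by
    rw [lt_div_iff₀ hu]
    nlinarith
  linarith [neg_abs_le c₁]

theorem stmt1_general (Γ α ν u₀ e₀ : ℝ) (hΓ : 0 < Γ) (hα : 0 < α)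
    (hu₀ : 0 < u₀) (c : ℝ × ℝ)
    (xs : ℝ)
    (u e : ℝ → ℝ)
    (hsol : IsProfileSol Γ α ν u₀ e₀ c u e (Set.Ico 0 xs))
    (hupos : ∀ x ∈ Set.Ico (0:ℝ) xs, 0 < u x)
    (et : ℝ) (het : 0 < et)
    (helow : ∀ x ∈ Set.Ico (0:ℝ) xs, et ≤ e x) :
    ∃ ut : ℝ, 0 < ut ∧ ∀ x ∈ Set.Ico (0:ℝ) xs, ut < u x := by
  obtain ⟨hu_zero, -, hderiv⟩ := hsol
  set m := min u₀ (Γ * et / (|c.1| + 1))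
  have hm : 0 < m := lt_min hu₀ (by positivity)
  have hm_le : ∀ x ∈ Ico (0:ℝ) xs, m ≤ u x :=
    le_image_Ico_of_deriv_pos_of_eq (fun x hx => (hderiv x hx).1) (hu_zero ▸ min_le_left _ _)
      fun x hx hux => mul_pos (div_pos hu₀ hα) <| add_add_mul_div_pos hΓ.le (hupos x hx)
        (hux ▸ min_le_right _ _) (helow x hx)
  exact ⟨m / 2, half_pos hm, fun x hx => (half_lt_self hm).trans_le (hm_le x hx)⟩

/-- Lemma small(ii): if `e` is bounded below by a positive constant on `[0, x*)`,
then `u` is bounded below by a positive constant on `[0, x*)`. -/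
theorem stmt1 (Γ α ν u₀ e₀ : ℝ) (hΓ : 0 < Γ) (hα : 0 < α) (hν : 0 < ν)
    (hu₀ : 0 < u₀) (he₀ : 0 < e₀) (c : ℝ × ℝ)
    (xs : ℝ) (hxs : xs ∈ Set.Ioc (0:ℝ) 1)
    (u e : ℝ → ℝ)
    (hsol : IsProfileSol Γ α ν u₀ e₀ c u e (Set.Ico 0 xs))
    (hupos : ∀ x ∈ Set.Ico (0:ℝ) xs, 0 < u x)
    (et : ℝ) (het : 0 < et)
    (helow : ∀ x ∈ Set.Ico (0:ℝ) xs, et ≤ e x) :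
    ∃ ut : ℝ, 0 < ut ∧ ∀ x ∈ Set.Ico (0:ℝ) xs, ut < u x :=
  stmt1_general Γ α ν u₀ e₀ hΓ hα hu₀ c xs u e hsol hupos et het helow
end
end

section
/- Let Γ, α, ν, u₀, e₀ > 0, let c = (c₁,c₂) ∈ ℝ², let x* ∈ (0,1], and let (u,e) : [0,x*) → ℝ² be a solution of the profile ODE with u > 0 and e > 0 on [0,x*). If u(x) → 0 and e(x) → 0 simultaneously as x → x*⁻, then c₁ < 0 and c₂ < 0. -/
/-!
If `c₁ ≥ 0`, every term of `u′` is positive, so `u` increases near `x*`, and a positive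
increasing function cannot tend to `0` from the left. Hence `c₁ < 0`; then `u < −2c₁` near
`x*` makes `−c₁u − u²/2` positive, so if `c₂ ≥ 0` the same argument applies to `e`.
-/

open Set Filter Topology

noncomputable section

lemma eventually_lt_of_tendsto_nhdsLT_of_deriv_pos {f f' : ℝ → ℝ} {b L : ℝ}
    (hf : ∀ᶠ x in 𝓝[<] b, HasDerivAt f (f' x) x ∧ 0 < f' x)
    (hL : Tendsto f (𝓝[<] b) (𝓝 L)) : ∀ᶠ x in 𝓝[<] b, f x < L := by
  obtain ⟨a, hab, hIoo⟩ := mem_nhdsLT_iff_exists_Ioo_subset.1 hf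
  have hmono : StrictMonoOn f (Ioo a b) :=
    strictMonoOn_of_hasDerivWithinAt_pos (convex_Ioo a b)
      (fun x hx => (hIoo hx).1.continuousAt.continuousWithinAt)
      (fun x hx => (hIoo (interior_subset hx)).1.hasDerivWithinAt)
      (fun x hx => (hIoo (interior_subset hx)).2)
  filter_upwards [Ioo_mem_nhdsLT hab] with x hx
  obtain ⟨y, hxy, hyb⟩ := exists_between hx.2
  have hy : y ∈ Ioo a b := ⟨hx.1.trans hxy, hyb⟩
  have hyL : f y ≤ L := ge_of_tendsto hL <| by
    filter_upwards [Ioo_mem_nhdsLT hyb] with z hz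
    exact (hmono hy ⟨hy.1.trans hz.1, hz.2⟩ hz.1).le
  exact (hmono hx hy hxy).trans_le hyL

lemma not_tendsto_nhdsLT_of_le_of_deriv_pos {f f' : ℝ → ℝ} {b L : ℝ}
    (hle : ∀ᶠ x in 𝓝[<] b, L ≤ f x)
    (hf : ∀ᶠ x in 𝓝[<] b, HasDerivAt f (f' x) x ∧ 0 < f' x) :
    ¬ Tendsto f (𝓝[<] b) (𝓝 L) := fun hL =>
  let ⟨_, hLx, hxL⟩ := (hle.and (eventually_lt_of_tendsto_nhdsLT_of_deriv_pos hf hL)).exists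
  hLx.not_gt hxL

lemma IsProfileSol.eventually_hasDerivAt {Γ α ν u₀ e₀ b : ℝ} {c : ℝ × ℝ} {u e : ℝ → ℝ}
    (hsol : IsProfileSol Γ α ν u₀ e₀ c u e (Ico 0 b)) (hb : 0 < b) :
    ∀ᶠ x in 𝓝[<] b,
      HasDerivAt u ((u₀ / α) * (c.1 + u x + Γ * e x / u x)) x ∧
      HasDerivAt e ((u₀ / ν) * (c.2 - c.1 * u x - (u x) ^ 2 / 2 + e x)) x := by
  filter_upwards [Ioo_mem_nhdsLT hb] with x hx
  have hnhds : Ico 0 b ∈ 𝓝 x := Ico_mem_nhds hx.1 hx.2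
  obtain ⟨hu, he⟩ := hsol.2.2 x (Ioo_subset_Ico_self hx)
  exact ⟨hu.hasDerivAt hnhds, he.hasDerivAt hnhds⟩

theorem stmt2_general (Γ α ν u₀ e₀ : ℝ) (hΓ : 0 < Γ) (hα : 0 < α) (hν : 0 < ν)
    (hu₀ : 0 < u₀) (c : ℝ × ℝ)
    (xs : ℝ) (hxs : xs ∈ Set.Ioc (0:ℝ) 1)
    (u e : ℝ → ℝ)
    (hsol : IsProfileSol Γ α ν u₀ e₀ c u e (Set.Ico 0 xs))
    (hpos : ∀ x ∈ Set.Ico (0:ℝ) xs, 0 < u x ∧ 0 < e x)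
    (hulim : Filter.Tendsto u (nhdsWithin xs (Set.Ico 0 xs)) (nhds 0))
    (helim : Filter.Tendsto e (nhdsWithin xs (Set.Ico 0 xs)) (nhds 0)) :
    c.1 < 0 ∧ c.2 < 0 := by
  rw [nhdsWithin_Ico_eq_nhdsLT hxs.1] at hulim helim
  have hderiv := hsol.eventually_hasDerivAt hxs.1
  have hpos_near : ∀ᶠ x in 𝓝[<] xs, 0 < u x ∧ 0 < e x :=
    mem_of_superset (Ico_mem_nhdsLT hxs.1) hpos
  have hc₁ : c.1 < 0 := by
    by_contra! hc₁
    refine not_tendsto_nhdsLT_of_le_of_deriv_pos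
      (f' := fun x => (u₀ / α) * (c.1 + u x + Γ * e x / u x))
      (hpos_near.mono fun x hx => hx.1.le) ?_ hulim
    filter_upwards [hderiv, hpos_near] with x hd ⟨hux, hex⟩
    exact ⟨hd.1, mul_pos (by positivity) (by positivity)⟩
  refine ⟨hc₁, ?_⟩
  by_contra! hc₂
  have hu_small : ∀ᶠ x in 𝓝[<] xs, u x < -2 * c.1 := hulim (Iio_mem_nhds (by linarith))
  refine not_tendsto_nhdsLT_of_le_of_deriv_pos
    (f' := fun x => (u₀ / ν) * (c.2 - c.1 * u x - (u x) ^ 2 / 2 + e x))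
    (hpos_near.mono fun x hx => hx.2.le) ?_ helim
  filter_upwards [hderiv, hpos_near, hu_small] with x hd ⟨hux, hex⟩ hx_small
  refine ⟨hd.2, mul_pos (by positivity) ?_⟩
  nlinarith [mul_pos hux (by linarith : 0 < -c.1 - u x / 2)]

/-- Lemma small(iii): if `(u, e) → 0` simultaneously as `x → x*⁻` with `u, e > 0`,
then `c₁ < 0` and `c₂ < 0`. -/
theorem stmt2 (Γ α ν u₀ e₀ : ℝ) (hΓ : 0 < Γ) (hα : 0 < α) (hν : 0 < ν)
    (hu₀ : 0 < u₀) (he₀ : 0 < e₀) (c : ℝ × ℝ)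
    (xs : ℝ) (hxs : xs ∈ Set.Ioc (0:ℝ) 1)
    (u e : ℝ → ℝ)
    (hsol : IsProfileSol Γ α ν u₀ e₀ c u e (Set.Ico 0 xs))
    (hpos : ∀ x ∈ Set.Ico (0:ℝ) xs, 0 < u x ∧ 0 < e x)
    (hulim : Filter.Tendsto u (nhdsWithin xs (Set.Ico 0 xs)) (nhds 0))
    (helim : Filter.Tendsto e (nhdsWithin xs (Set.Ico 0 xs)) (nhds 0)) :
    c.1 < 0 ∧ c.2 < 0 :=
  stmt2_general Γ α ν u₀ e₀ hΓ hα hν hu₀ c xs hxs u e hsol hpos hulim helim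
end
end

section
/- Let Γ, α, ν, u₀, e₀ > 0 and let c = (c₁,c₂) ∈ ℝ² with c₁ < 0 and c₂ < 0. For every ε > 0 there exists δ > 0, depending only on c₁, c₂, ε (and Γ, α, ν, u₀), with the following property: if x* > 0 and (u,e) is a solution of the profile ODE on [0,x*] with u > 0 and e > 0 on [0,x*], and if u(x*) ≤ δ and e(x*) ≤ δ, then there exists x̃ ∈ [x*, x* + ε] such that (u,e) extends to a solution of the profile ODE on [0, x̃) with u > 0 and e > 0 on [0, x̃), and e(x) → 0 as x → x̃⁻. -/
noncomputable section

/-!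
Since `c₁ < 0` and `c₂ < 0`, for small `M, N > 0` the box `{u ≤ M, e ≤ N}` is forward
invariant: on its side `u = M` we have `u' < 0`, on its side `e = N` we have `e' < 0`. Inside the
box `e' ≤ -r` for some `r > 0`, so a positive solution with `u(x*), e(x*) ≤ δ = min(M, N, r ε)`
cannot survive beyond `x* + ε`. The field is locally Lipschitz on `u > 0`, so the solution has a
maximal positive continuation to some `[0, x̃)`, and it leaves every compact subset of the open
quadrant as `x → x̃`. If `e` stayed above some `m > 0`, then `u' > 0` whenever `u` is small, so
`u` would stay bounded below and the orbit would remain in a compact subset of the quadrant;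
hence `e → 0`.
-/

open Set Filter Topology Metric NNReal

section Deriv

variable {E F : Type*} [NormedAddCommGroup E] [NormedSpace ℝ E] [NormedAddCommGroup F]
  [NormedSpace ℝ F] {f : ℝ → E × F} {f' : E × F} {s : Set ℝ} {x : ℝ}

theorem HasDerivWithinAt.fst (h : HasDerivWithinAt f f' s x) :
    HasDerivWithinAt (fun t ↦ (f t).1) f'.1 s x :=
  (hasFDerivAt_fst (𝕜 := ℝ) (p := f x)).comp_hasDerivWithinAt x h

theorem HasDerivWithinAt.snd (h : HasDerivWithinAt f f' s x) :
    HasDerivWithinAt (fun t ↦ (f t).2) f'.2 s x :=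
  (hasFDerivAt_snd (𝕜 := ℝ) (p := f x)).comp_hasDerivWithinAt x h

end Deriv

theorem HasDerivWithinAt.eventually_nhdsGT_le {f : ℝ → ℝ} {f' x c : ℝ}
    (hf : HasDerivWithinAt f f' (Ici x) x) (hx : f x ≤ c) (hc : f x = c → f' < 0) :
    ∀ᶠ y in 𝓝[>] x, f y ≤ c := by
  rcases hx.lt_or_eq with hlt | heq
  · exact ((hf.continuousWithinAt.mono Ioi_subset_Ici_self).eventually (gt_mem_nhds hlt)).mono
      fun _ ↦ le_of_lt
  · filter_upwards [hf.Ioi_of_Ici.limsup_slope_le' (lt_irrefl x) (hc heq), self_mem_nhdsWithin]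
      with y hy hxy
    exact heq ▸ ((slope_neg_iff_of_le (le_of_lt hxy)).1 hy).le

theorem image_le_and_le_of_deriv_right_neg_boundary {f g f' g' : ℝ → ℝ} {a b F G : ℝ}
    (hf : ContinuousOn f (Icc a b)) (hg : ContinuousOn g (Icc a b))
    (hf' : ∀ x ∈ Ico a b, HasDerivWithinAt f (f' x) (Ici x) x)
    (hg' : ∀ x ∈ Ico a b, HasDerivWithinAt g (g' x) (Ici x) x)
    (hfa : f a ≤ F) (hga : g a ≤ G)
    (hfF : ∀ x ∈ Ico a b, f x = F → g x ≤ G → f' x < 0)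
    (hgG : ∀ x ∈ Ico a b, g x = G → f x ≤ F → g' x < 0) :
    ∀ ⦃x⦄, x ∈ Icc a b → f x ≤ F ∧ g x ≤ G := by
  set s := {x | f x ≤ F ∧ g x ≤ G}
  have hs : IsClosed (s ∩ Icc a b) := by
    have := (hf.preimage_isClosed_of_isClosed isClosed_Icc (isClosed_Iic (a := F))).inter
      (hg.preimage_isClosed_of_isClosed isClosed_Icc (isClosed_Iic (a := G)))
    convert this using 1
    ext x; simp only [s, mem_inter_iff, mem_ofPred_eq, mem_preimage, mem_Iic]; tauto
  refine hs.Icc_subset_of_forall_mem_nhdsWithin ⟨hfa, hga⟩ fun x ⟨⟨hfx, hgx⟩, hx⟩ ↦ ?_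
  exact ((hf' x hx).eventually_nhdsGT_le hfx (hfF x hx · hgx)).and
    ((hg' x hx).eventually_nhdsGT_le hgx (hgG x hx · hfx))

section IntegralCurve

variable {E : Type*} [NormedAddCommGroup E] [NormedSpace ℝ E] {v : E → E} {U : Set E}
  {x₀ : E} {γ γ' : ℝ → E} {a b c : ℝ}

structure IsSolutionIcc (v : E → E) (U : Set E) (x₀ : E) (a b : ℝ) (γ : ℝ → E) : Prop where
  apply_left : γ a = x₀
  isIntegralCurveOn : IsIntegralCurveOn γ (fun _ ↦ v) (Icc a b)
  mapsTo : MapsTo γ (Icc a b) U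

theorem IsSolutionIcc.mono (h : IsSolutionIcc v U x₀ a b γ) {b' : ℝ} (hb : b' ≤ b) :
    IsSolutionIcc v U x₀ a b' γ :=
  ⟨h.apply_left, h.isIntegralCurveOn.mono (Icc_subset_Icc_right hb),
    h.mapsTo.mono_left (Icc_subset_Icc_right hb)⟩

theorem IsIntegralCurveOn.hasDerivWithinAt_Ici (hγ : IsIntegralCurveOn γ (fun _ ↦ v) (Icc a b))
    {t : ℝ} (ht : t ∈ Ico a b) : HasDerivWithinAt γ (v (γ t)) (Ici t) t :=
  (hγ t (Ico_subset_Icc_self ht)).mono_of_mem_nhdsWithin (Icc_mem_nhdsGE_of_mem ht)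

theorem IsIntegralCurveOn.ite_Icc (hγ : IsIntegralCurveOn γ (fun _ ↦ v) (Icc a b))
    (hγ' : IsIntegralCurveOn γ' (fun _ ↦ v) (Icc b c)) (hb : γ b = γ' b) :
    IsIntegralCurveOn (fun t ↦ if t ≤ b then γ t else γ' t) (fun _ ↦ v) (Icc a c) := by
  set g := fun t ↦ if t ≤ b then γ t else γ' t
  have hgγ : EqOn g γ (Icc a b) := fun t ht ↦ if_pos ht.2
  have hgγ' : EqOn g γ' (Icc b c) := fun t ht ↦ by
    rcases ht.1.eq_or_lt with rfl | h
    · exact (if_pos le_rfl).trans hb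
    · exact if_neg h.not_ge
  have piece {s : Set ℝ} {δ : ℝ → E} (hs : IsClosed s)
      (hδ : IsIntegralCurveOn δ (fun _ ↦ v) s) (hgδ : EqOn g δ s) (t : ℝ) :
      HasDerivWithinAt g (v (g t)) s t := by
    by_cases ht : t ∈ s
    · rw [hgδ ht]; exact (hδ t ht).congr hgδ (hgδ ht)
    · exact HasFDerivWithinAt.of_notMem_closure (by rwa [hs.closure_eq])
  refine fun t _ ↦ ((piece isClosed_Icc hγ hgγ t).union (piece isClosed_Icc hγ' hgγ' t)).mono
    fun s hs ↦ ?_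
  by_cases h : s ≤ b
  exacts [Or.inl ⟨hs.1, h⟩, Or.inr ⟨(not_le.1 h).le, hs.2⟩]

theorem IsSolutionIcc.eqOn (hv : LocallyLipschitzOn U v) {b' : ℝ}
    (h : IsSolutionIcc v U x₀ a b γ) (h' : IsSolutionIcc v U x₀ a b' γ') :
    EqOn γ γ' (Icc a (min b b')) := by
  replace h := h.mono (min_le_left b b')
  replace h' := h'.mono (min_le_right b b')
  set K := γ '' Icc a (min b b') ∪ γ' '' Icc a (min b b')
  have hK : IsCompact K :=
    (isCompact_Icc.image_of_continuousOn h.isIntegralCurveOn.continuousOn).union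
      (isCompact_Icc.image_of_continuousOn h'.isIntegralCurveOn.continuousOn)
  obtain ⟨L, hL⟩ := (hv.mono (union_subset h.mapsTo.image_subset h'.mapsTo.image_subset)
    ).exists_lipschitzOnWith_of_compact hK
  exact ODE_solution_unique_of_mem_Icc_right (v := fun _ ↦ v) (s := fun _ ↦ K) (fun _ _ ↦ hL)
    h.isIntegralCurveOn.continuousOn (fun _ ↦ h.isIntegralCurveOn.hasDerivWithinAt_Ici)
    (fun _ ht ↦ Or.inl (mem_image_of_mem γ (Ico_subset_Icc_self ht)))
    h'.isIntegralCurveOn.continuousOn (fun _ ↦ h'.isIntegralCurveOn.hasDerivWithinAt_Ici)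
    (fun _ ht ↦ Or.inr (mem_image_of_mem γ' (Ico_subset_Icc_self ht)))
    (h.apply_left.trans h'.apply_left.symm)

theorem exists_isIntegralCurveOn_Ico (hv : LocallyLipschitzOn U v) {T : ℝ}
    (h : ∀ b ∈ Ico a T, ∃ γ, IsSolutionIcc v U x₀ a b γ) :
    ∃ Γ : ℝ → E, IsIntegralCurveOn Γ (fun _ ↦ v) (Ico a T) ∧ MapsTo Γ (Ico a T) U ∧
      ∀ b < T, ∀ γ, IsSolutionIcc v U x₀ a b γ → EqOn Γ γ (Icc a b) := by
  -- `Γ t` is read off a solution that lives a little beyond `t`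
  have h' (t : ℝ) : ∃ γ, t ∈ Ico a T → IsSolutionIcc v U x₀ a ((t + T) / 2) γ := by
    by_cases ht : t ∈ Ico a T
    · obtain ⟨γ, hγ⟩ := h ((t + T) / 2) ⟨by linarith [ht.1, ht.2], by linarith [ht.2]⟩
      exact ⟨γ, fun _ ↦ hγ⟩
    · exact ⟨0, fun h ↦ absurd h ht⟩
  choose γ hγ using h'
  have agree {b : ℝ} (hb : b < T) {δ : ℝ → E} (hδ : IsSolutionIcc v U x₀ a b δ) {t s : ℝ}
      (ht : t ∈ Icc a b) (hs : s ∈ Icc a t) : γ t s = δ s :=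
    (hγ t ⟨ht.1, ht.2.trans_lt hb⟩).eqOn hv hδ
      ⟨hs.1, le_min (by linarith [hs.2, ht.2]) (hs.2.trans ht.2)⟩
  refine ⟨fun t ↦ γ t t, fun t ht ↦ ?_,
    fun t ht ↦ (hγ t ht).mapsTo ⟨ht.1, by linarith [ht.2]⟩,
    fun b hb δ hδ t ht ↦ agree hb hδ ht ⟨ht.1, le_rfl⟩⟩
  have hts : t < (t + T) / 2 := by linarith [ht.2]
  have heq : EqOn (fun s ↦ γ s s) (γ t) (Icc a ((t + T) / 2)) := fun s hs ↦
    agree (by linarith [ht.2]) (hγ t ht) hs ⟨hs.1, le_rfl⟩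
  have hmem : Icc a ((t + T) / 2) ∈ 𝓝[Ico a T] t :=
    mem_nhdsWithin.2 ⟨Iio ((t + T) / 2), isOpen_Iio, hts, fun s hs ↦ ⟨hs.2.1, hs.1.le⟩⟩
  exact (((hγ t ht).isIntegralCurveOn t ⟨ht.1, hts.le⟩).congr heq (heq ⟨ht.1, hts.le⟩)
    ).mono_of_mem_nhdsWithin hmem

theorem IsCompact.exists_pos_forall_isSolutionIcc [ProperSpace E] {K : Set E}
    (hK : IsCompact K) (hU : IsOpen U) (hKU : K ⊆ U) (hv : LocallyLipschitzOn U v) :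
    ∃ η > 0, ∀ x ∈ K, ∀ t₀ : ℝ, ∃ γ, IsSolutionIcc v U x t₀ (t₀ + η) γ := by
  obtain ⟨r, hr, hrU⟩ := hK.exists_cthickening_subset_open hU hKU
  have hvr := hv.mono hrU
  obtain ⟨L, hL⟩ := hvr.exists_lipschitzOnWith_of_compact hK.cthickening
  obtain ⟨C, hC⟩ := hK.cthickening.exists_bound_of_continuousOn hvr.continuousOn
  set B : ℝ≥0 := C.toNNReal
  have hB : ∀ y ∈ cthickening r K, ‖v y‖ ≤ B := fun y hy ↦ (hC y hy).trans C.le_coe_toNNReal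
  set η := r / (B + 1)
  have hη : 0 < η := by positivity
  have hBη : (B + 1) * η = r := by simp only [η]; field_simp
  refine ⟨η, hη, fun x hx t₀ ↦ ?_⟩
  have hball : closedBall x r ⊆ cthickening r K := closedBall_subset_cthickening hx r
  have hpl : IsPicardLindelof (fun _ ↦ v) (tmin := t₀) (tmax := t₀ + η)
      ⟨t₀, left_mem_Icc.2 (by linarith)⟩ x ⟨r, hr.le⟩ 0 B L := by
    refine .of_time_independent (fun y hy ↦ hB y (hball hy)) (hL.mono hball) ?_
    simp only [add_sub_cancel_left, sub_self, max_eq_left hη.le, NNReal.coe_zero, sub_zero]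
    change (B : ℝ) * η ≤ r
    linarith
  obtain ⟨γ, hγ₀, hγ⟩ := hpl.exists_eq_forall_mem_Icc_hasDerivWithinAt₀
  replace hγ : IsIntegralCurveOn γ (fun _ ↦ v) (Icc t₀ (t₀ + η)) := hγ
  -- a priori bound: `γ` moves at speed `< B + 1` as long as it stays in `closedBall x r`
  have hdist : ∀ t ∈ Icc t₀ (t₀ + η), ‖γ t - x‖ ≤ (B + 1) * (t - t₀) := by
    refine image_norm_le_of_norm_deriv_right_lt_deriv_boundary (f' := fun t ↦ v (γ t))
      (hγ.continuousOn.sub continuousOn_const)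
      (fun t ht ↦ (hγ.hasDerivWithinAt_Ici ht).sub_const x) (by simp [hγ₀])
      (fun t ↦ by simpa using ((hasDerivAt_id t).sub_const t₀).const_mul ((B : ℝ) + 1)) ?_
    intro t ht heq
    have : γ t ∈ closedBall x r := by
      rw [mem_closedBall, dist_eq_norm, ← Pi.sub_apply γ (fun _ ↦ x), heq, ← hBη]
      gcongr; linarith [ht.2]
    exact (hB _ (hball this)).trans_lt (lt_add_one _)
  refine ⟨γ, hγ₀, hγ, fun t ht ↦ hrU (hball ?_)⟩
  rw [mem_closedBall, dist_eq_norm, ← hBη]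
  exact (hdist t ht).trans (by gcongr; linarith [ht.2])

theorem IsCompact.exists_pos_forall_extend [ProperSpace E] {K : Set E} (hK : IsCompact K)
    (hU : IsOpen U) (hKU : K ⊆ U) (hv : LocallyLipschitzOn U v) :
    ∃ η > 0, ∀ (x₀ : E) (a b : ℝ) (γ : ℝ → E), IsSolutionIcc v U x₀ a b γ → a ≤ b →
      γ b ∈ K → ∃ γ', IsSolutionIcc v U x₀ a (b + η) γ' ∧ EqOn γ' γ (Icc a b) := by
  obtain ⟨η, hη, H⟩ := hK.exists_pos_forall_isSolutionIcc hU hKU hv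
  refine ⟨η, hη, fun x₀ a b γ hγ hab hb ↦ ?_⟩
  obtain ⟨γ', hγ'b, hγ', hγ'U⟩ := H _ hb b
  have heq : EqOn (fun t ↦ if t ≤ b then γ t else γ' t) γ (Icc a b) :=
    fun t ht ↦ if_pos ht.2
  refine ⟨_, ⟨(heq ⟨le_rfl, hab⟩).trans hγ.apply_left,
    hγ.isIntegralCurveOn.ite_Icc hγ' hγ'b.symm, fun t ht ↦ ?_⟩, heq⟩
  by_cases h : t ≤ b
  · simpa only [if_pos h] using hγ.mapsTo ⟨ht.1, h⟩
  · simpa only [if_neg h] using hγ'U ⟨(not_le.1 h).le, ht.2⟩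

theorem exists_maximal_isIntegralCurveOn [ProperSpace E] (hU : IsOpen U)
    (hv : LocallyLipschitzOn U v) {b₀ S : ℝ} (hab₀ : a ≤ b₀)
    (h₀ : ∃ γ, IsSolutionIcc v U x₀ a b₀ γ) (hS : ∀ b γ, IsSolutionIcc v U x₀ a b γ → b ≤ S) :
    ∃ T, b₀ < T ∧ T ≤ S ∧ ∃ Γ : ℝ → E, IsIntegralCurveOn Γ (fun _ ↦ v) (Ico a T) ∧
      MapsTo Γ (Ico a T) U ∧
      (∀ b < T, ∀ γ, IsSolutionIcc v U x₀ a b γ → EqOn Γ γ (Icc a b)) ∧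
      ∀ K, IsCompact K → K ⊆ U → ∀ t₀ ∈ Ico a T, ¬ MapsTo Γ (Ico t₀ T) K := by
  set A := {b | ∃ γ, IsSolutionIcc v U x₀ a b γ}
  have hA : BddAbove A := ⟨S, fun b ⟨γ, hγ⟩ ↦ hS b γ hγ⟩
  set T := sSup A
  have escape (K : Set E) (hK : IsCompact K) (hKU : K ⊆ U) :
      ∃ η > 0, ∀ b γ, IsSolutionIcc v U x₀ a b γ → a ≤ b → γ b ∈ K → b + η ≤ T := by
    obtain ⟨η, hη, H⟩ := hK.exists_pos_forall_extend hU hKU hv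
    refine ⟨η, hη, fun b γ hγ hab hb ↦ le_csSup hA ?_⟩
    obtain ⟨γ', hγ', -⟩ := H x₀ a b γ hγ hab hb
    exact ⟨γ', hγ'⟩
  have haT : a ≤ T := hab₀.trans (le_csSup hA h₀)
  have hTA : T ∉ A := by
    rintro ⟨γ, hγ⟩
    obtain ⟨η, hη, H⟩ := escape {γ T} isCompact_singleton
      (singleton_subset_iff.2 (hγ.mapsTo ⟨haT, le_rfl⟩))
    linarith [H T γ hγ haT rfl]
  have hb₀T : b₀ < T := (le_csSup hA h₀).lt_of_ne fun h ↦ hTA (h ▸ h₀ : sSup A ∈ A)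
  have hIco (b : ℝ) (hb : b ∈ Ico a T) : ∃ γ, IsSolutionIcc v U x₀ a b γ := by
    obtain ⟨b', ⟨γ, hγ⟩, hbb'⟩ := exists_lt_of_lt_csSup ⟨b₀, h₀⟩ hb.2
    exact ⟨γ, hγ.mono hbb'.le⟩
  obtain ⟨Γ, hΓ, hΓU, hΓeq⟩ := exists_isIntegralCurveOn_Ico hv hIco
  refine ⟨T, hb₀T, csSup_le ⟨b₀, h₀⟩ fun b ⟨γ, hγ⟩ ↦ hS b γ hγ, Γ, hΓ, hΓU, hΓeq,
    fun K hK hKU t₀ ht₀ hΓK ↦ ?_⟩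
  obtain ⟨η, hη, H⟩ := escape K hK hKU
  obtain ⟨γ₀, hγ₀⟩ := h₀
  set b := max t₀ (T - η / 2)
  have hb : b ∈ Ico t₀ T := ⟨le_max_left _ _, max_lt ht₀.2 (by linarith)⟩
  have hsub : Icc a b ⊆ Ico a T := Icc_subset_Ico_right hb.2
  have hΓa : Γ a = x₀ := (hΓeq b₀ hb₀T γ₀ hγ₀ ⟨le_rfl, hab₀⟩).trans hγ₀.apply_left
  linarith [H b Γ ⟨hΓa, hΓ.mono hsub, hΓU.mono_left hsub⟩ (ht₀.1.trans hb.1) (hΓK hb),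
    le_max_right t₀ (T - η / 2)]

end IntegralCurve

def profileField (k₁ k₂ Γ : ℝ) (c p : ℝ × ℝ) : ℝ × ℝ :=
  (k₁ * (c.1 + p.1 + Γ * p.2 / p.1), k₂ * (c.2 - c.1 * p.1 - p.1 ^ 2 / 2 + p.2))

theorem isProfileSol_iff {Γ α ν u₀ e₀ : ℝ} {c : ℝ × ℝ} {u e : ℝ → ℝ} {S : Set ℝ} :
    IsProfileSol Γ α ν u₀ e₀ c u e S ↔ (u 0, e 0) = (u₀, e₀) ∧
      IsIntegralCurveOn (fun t ↦ (u t, e t))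
        (fun _ ↦ profileField (u₀ / α) (u₀ / ν) Γ c) S := by
  simp only [IsProfileSol, Prod.mk.injEq, and_assoc]
  exact and_congr_right' (and_congr_right' ⟨fun h t ht ↦ (h t ht).1.prodMk (h t ht).2,
    fun h t ht ↦ ⟨(h t ht).fst, (h t ht).snd⟩⟩)

theorem profileField_locallyLipschitzOn (k₁ k₂ Γ : ℝ) (c : ℝ × ℝ) :
    LocallyLipschitzOn {p : ℝ × ℝ | 0 < p.1} (profileField k₁ k₂ Γ c) := by
  refine ContDiffOn.locallyLipschitzOn
    (convex_halfSpace_gt (LinearMap.fst ℝ ℝ ℝ).isLinear 0) ?_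
  unfold profileField
  fun_prop (disch := exact fun p hp ↦ ne_of_gt hp)

section Profile

variable {k₁ k₂ Γ : ℝ} {c : ℝ × ℝ} {γ : ℝ → ℝ × ℝ} {a b M δ : ℝ}

-- On the side `u = M` of the box `{u ≤ M, e ≤ δ}` the first inequality makes `u' < 0`,
-- on the side `e = δ` the second one makes `e' < 0`.
theorem exists_profile_trap (Γ : ℝ) (hc₁ : c.1 < 0) (hc₂ : c.2 < 0) :
    ∃ M δ : ℝ, 0 < M ∧ 0 < δ ∧ c.1 + M + Γ * δ / M < 0 ∧ c.2 - c.1 * M + δ < 0 := by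
  have exists_pos {f g : ℝ → ℝ} (hf : Continuous f) (hg : Continuous g) (hf₀ : f 0 < 0)
      (hg₀ : g 0 < 0) : ∃ x > 0, f x < 0 ∧ g x < 0 := by
    have := ((hf.tendsto 0).eventually_lt_const hf₀).and ((hg.tendsto 0).eventually_lt_const hg₀)
    exact (((this.filter_mono nhdsWithin_le_nhds).and self_mem_nhdsWithin).exists
      (f := 𝓝[>] 0)).imp fun _ h ↦ ⟨h.2, h.1⟩
  obtain ⟨M, hM, hM₁, hM₂⟩ := exists_pos (f := fun M ↦ c.1 + M) (g := fun M ↦ c.2 - c.1 * M)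
    (by fun_prop) (by fun_prop) (by simpa) (by simpa)
  obtain ⟨δ, hδ, hδ₁, hδ₂⟩ := exists_pos (f := fun δ ↦ c.1 + M + Γ * δ / M)
    (g := fun δ ↦ c.2 - c.1 * M + δ) (by fun_prop) (by fun_prop) (by simpa) (by simpa using hM₂)
  exact ⟨M, δ, hM, hδ, hδ₁, hδ₂⟩

section Barriers

variable (hγ : IsIntegralCurveOn γ (fun _ ↦ profileField k₁ k₂ Γ c) (Icc a b))
include hγ

theorem profile_trapped (hk₁ : 0 < k₁) (hk₂ : 0 < k₂) (hΓ : 0 ≤ Γ) (hc₁ : c.1 ≤ 0)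
    (hM : 0 < M) (hMδ : c.1 + M + Γ * δ / M < 0) (hδ : c.2 - c.1 * M + δ < 0)
    (ha : (γ a).1 ≤ M) (ha' : (γ a).2 ≤ δ) : ∀ t ∈ Icc a b, (γ t).1 ≤ M ∧ (γ t).2 ≤ δ := by
  refine image_le_and_le_of_deriv_right_neg_boundary hγ.continuousOn.fst hγ.continuousOn.snd
    (fun t ht ↦ (hγ.hasDerivWithinAt_Ici ht).fst) (fun t ht ↦ (hγ.hasDerivWithinAt_Ici ht).snd)
    ha ha' (fun t _ hu he ↦ ?_) (fun t _ he hu ↦ ?_)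
  · simp only [profileField, hu]
    refine mul_neg_of_pos_of_neg hk₁ (lt_of_le_of_lt ?_ hMδ)
    gcongr
  · simp only [profileField, he]
    refine mul_neg_of_pos_of_neg hk₂ (lt_of_le_of_lt ?_ hδ)
    nlinarith [sq_nonneg (γ t).1]

theorem profile_snd_le (hk₂ : 0 ≤ k₂) (hc₁ : c.1 ≤ 0) (hab : a ≤ b)
    (hbd : ∀ t ∈ Icc a b, (γ t).1 ≤ M ∧ (γ t).2 ≤ δ) :
    (γ b).2 ≤ (γ a).2 + k₂ * (c.2 - c.1 * M + δ) * (b - a) := by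
  refine image_le_of_deriv_right_le_deriv_boundary hγ.continuousOn.snd
    (fun t ht ↦ (hγ.hasDerivWithinAt_Ici ht).snd) (by simp) (by fun_prop)
    (fun t _ ↦ ((hasDerivWithinAt_id t _).sub_const a).const_mul _ |>.const_add _)
    (fun t ht ↦ ?_) (right_mem_Icc.2 hab)
  obtain ⟨hu, he⟩ := hbd t (Ico_subset_Icc_self ht)
  simp only [profileField, mul_one]
  refine mul_le_mul_of_nonneg_left ?_ hk₂
  nlinarith [sq_nonneg (γ t).1]

theorem profile_fst_ge (hk₁ : 0 < k₁) (hΓ : 0 ≤ Γ) {m m' : ℝ} (hm' : 0 < m')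
    (hm : -c.1 * m' ≤ Γ * m) (ha : m' ≤ (γ a).1) (he : ∀ t ∈ Icc a b, m ≤ (γ t).2) :
    ∀ t ∈ Icc a b, m' ≤ (γ t).1 := by
  have := image_le_of_deriv_right_lt_deriv_boundary (f := fun t ↦ -(γ t).1)
    (B := fun _ ↦ -m') hγ.continuousOn.fst.neg
    (fun t ht ↦ (hγ.hasDerivWithinAt_Ici ht).fst.neg) (neg_le_neg ha)
    (fun _ ↦ hasDerivAt_const _ (-m')) (fun t ht hu ↦ ?_)
  · exact fun t ht ↦ neg_le_neg_iff.1 (this ht)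
  have hu : (γ t).1 = m' := neg_inj.1 hu
  simp only [profileField, hu, neg_neg_iff_pos]
  refine mul_pos hk₁ ?_
  have : Γ * m / m' ≤ Γ * (γ t).2 / m' := by gcongr; exact he t (Ico_subset_Icc_self ht)
  have : -c.1 ≤ Γ * m / m' := by rw [le_div_iff₀ hm']; exact hm
  linarith

end Barriers

theorem profile_tendsto_snd_zero (hk₁ : 0 < k₁) (hk₂ : 0 < k₂) (hΓ : 0 < Γ) (hc₁ : c.1 < 0)
    (hM : 0 < M) (hMδ : c.1 + M + Γ * δ / M < 0) (hδ : c.2 - c.1 * M + δ < 0) {T : ℝ}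
    (hγ : IsIntegralCurveOn γ (fun _ ↦ profileField k₁ k₂ Γ c) (Ico a T))
    (hγQ : MapsTo γ (Ico a T) (Ioi 0 ×ˢ Ioi 0)) (haT : a < T) (ha : (γ a).1 ≤ M)
    (ha' : (γ a).2 ≤ δ)
    (hescape : ∀ K, IsCompact K → K ⊆ Ioi 0 ×ˢ Ioi 0 → ¬ MapsTo γ (Ico a T) K) :
    Tendsto (fun t ↦ (γ t).2) (𝓝[<] T) (𝓝 0) := by
  have restrict {t : ℝ} (ht : t < T) :
      IsIntegralCurveOn γ (fun _ ↦ profileField k₁ k₂ Γ c) (Icc a t) :=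
    hγ.mono (Icc_subset_Ico_right ht)
  have trapped {t : ℝ} (ht : t < T) : ∀ s ∈ Icc a t, (γ s).1 ≤ M ∧ (γ s).2 ≤ δ :=
    profile_trapped (restrict ht) hk₁ hk₂ hΓ.le hc₁.le hM hMδ hδ ha ha'
  -- If `e ≥ m > 0` up to `T`, then `u' > 0` wherever `u ≤ Γ m / |c₁|`, so `u` is bounded
  -- below as well and `γ` never leaves a compact subset of the open quadrant.
  have small : ∀ m > 0, ∃ t₀ ∈ Ico a T, (γ t₀).2 < m := by
    intro m hm
    by_contra! hlarge
    set m' := min (γ a).1 (Γ * m / -c.1)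
    have hm' : 0 < m' :=
      lt_min (hγQ ⟨le_rfl, haT⟩).1 (div_pos (mul_pos hΓ hm) (neg_pos.2 hc₁))
    have hm'm : -c.1 * m' ≤ Γ * m := by
      have := min_le_right (γ a).1 (Γ * m / -c.1)
      rwa [le_div_iff₀ (neg_pos.2 hc₁), mul_comm] at this
    refine hescape (Icc m' M ×ˢ Icc m δ) (isCompact_Icc.prod isCompact_Icc)
      (fun p hp ↦ ⟨hm'.trans_le hp.1.1, hm.trans_le hp.2.1⟩) fun t ht ↦ ?_
    have hup := trapped ht.2 t ⟨ht.1, le_rfl⟩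
    have hlow := profile_fst_ge (restrict ht.2) hk₁ hΓ.le hm' hm'm (min_le_left _ _)
      (fun s hs ↦ hlarge s ⟨hs.1, hs.2.trans_lt ht.2⟩) t ⟨ht.1, le_rfl⟩
    exact ⟨⟨hlow, hup.1⟩, hlarge t ht, hup.2⟩
  refine NormedAddGroup.tendsto_nhds_zero.2 fun m hm ↦ ?_
  obtain ⟨t₀, ht₀, hsm⟩ := small m hm
  filter_upwards [Ioo_mem_nhdsLT ht₀.2] with t ht
  have hdecay := profile_snd_le ((restrict ht.2).mono (Icc_subset_Icc_left ht₀.1)) hk₂.le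
    hc₁.le ht.1.le fun s hs ↦ trapped ht.2 s ⟨ht₀.1.trans hs.1, hs.2⟩
  have : k₂ * (c.2 - c.1 * M + δ) * (t - t₀) ≤ 0 :=
    mul_nonpos_of_nonpos_of_nonneg (mul_neg_of_pos_of_neg hk₂ hδ).le (sub_nonneg.2 ht.1.le)
  rw [Real.norm_eq_abs, abs_of_pos (hγQ ⟨ht₀.1.trans ht.1.le, ht.2⟩).2]
  linarith

theorem exists_profile_extension (hk₁ : 0 < k₁) (hk₂ : 0 < k₂) (hΓ : 0 < Γ) (hc₁ : c.1 < 0)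
    (hc₂ : c.2 < 0) (p₀ : ℝ × ℝ) :
    ∀ ε > 0, ∃ δ > 0, ∀ xs > 0, ∀ γ,
      IsSolutionIcc (profileField k₁ k₂ Γ c) (Ioi 0 ×ˢ Ioi 0) p₀ 0 xs γ →
      (γ xs).1 ≤ δ → (γ xs).2 ≤ δ →
      ∃ T ∈ Icc xs (xs + ε), ∃ γ' : ℝ → ℝ × ℝ,
        IsIntegralCurveOn γ' (fun _ ↦ profileField k₁ k₂ Γ c) (Ico 0 T) ∧
        MapsTo γ' (Ico 0 T) (Ioi 0 ×ˢ Ioi 0) ∧ EqOn γ' γ (Icc 0 xs) ∧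
        Tendsto (fun t ↦ (γ' t).2) (𝓝[Ico 0 T] T) (𝓝 0) := by
  intro ε hε
  obtain ⟨M, δ, hM, hδ, hMδ, hδc⟩ := exists_profile_trap Γ hc₁ hc₂
  set κ := k₂ * (c.2 - c.1 * M + δ)
  have hκ : κ < 0 := mul_neg_of_pos_of_neg hk₂ hδc
  refine ⟨min (min M δ) (-κ * ε), lt_min (lt_min hM hδ) (by nlinarith),
    fun xs hxs γ hγ hu he ↦ ?_⟩
  have hu : (γ xs).1 ≤ M := hu.trans ((min_le_left _ _).trans (min_le_left _ _))
  have heε : (γ xs).2 ≤ -κ * ε := he.trans (min_le_right _ _)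
  have he : (γ xs).2 ≤ δ := he.trans ((min_le_left _ _).trans (min_le_right _ _))
  have hQ : IsOpen (Ioi (0 : ℝ) ×ˢ Ioi (0 : ℝ)) := isOpen_Ioi.prod isOpen_Ioi
  have hv := (profileField_locallyLipschitzOn k₁ k₂ Γ c).mono
    fun p (hp : p ∈ Ioi 0 ×ˢ Ioi 0) ↦ hp.1
  -- `e` decays at rate `-κ` from `e xs ≤ -κ ε`, so no positive solution outlives `xs + ε`
  have lifespan (b : ℝ) (γ' : ℝ → ℝ × ℝ)
      (h : IsSolutionIcc (profileField k₁ k₂ Γ c) (Ioi 0 ×ˢ Ioi 0) p₀ 0 b γ') :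
      b ≤ xs + ε := by
    by_contra! hb
    have hxsb : xs ≤ b := by linarith
    have hxs' : γ' xs = γ xs := h.eqOn hv hγ ⟨hxs.le, le_min hxsb le_rfl⟩
    have hγ' := h.isIntegralCurveOn.mono (Icc_subset_Icc_left hxs.le)
    have := profile_snd_le hγ' hk₂.le hc₁.le hxsb
      (profile_trapped hγ' hk₁ hk₂ hΓ.le hc₁.le hM hMδ hδc (hxs' ▸ hu) (hxs' ▸ he))
    have hpos : 0 < (γ' b).2 := (h.mapsTo ⟨by linarith, le_rfl⟩).2
    rw [hxs'] at this
    nlinarith [mul_pos_of_neg_of_neg hκ (by linarith : xs + ε - b < 0)]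
  obtain ⟨T, hxsT, hT, γ', hγ', hγ'Q, hγ'eq, hescape⟩ :=
    exists_maximal_isIntegralCurveOn hQ hv hxs.le ⟨γ, hγ⟩ lifespan
  have heq : EqOn γ' γ (Icc 0 xs) := hγ'eq xs hxsT γ hγ
  have hxs' : γ' xs = γ xs := heq ⟨hxs.le, le_rfl⟩
  have hsub : Ico xs T ⊆ Ico 0 T := Ico_subset_Ico_left hxs.le
  refine ⟨T, ⟨hxsT.le, hT⟩, γ', hγ', hγ'Q, heq, Tendsto.mono_left ?_
    (nhdsWithin_mono _ fun t ht ↦ ht.2)⟩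
  exact profile_tendsto_snd_zero hk₁ hk₂ hΓ hc₁ hM hMδ hδc (hγ'.mono hsub)
    (hγ'Q.mono_left hsub) hxsT (hxs' ▸ hu) (hxs' ▸ he)
    fun K hK hKQ ↦ hescape K hK hKQ xs ⟨hxs.le, hxsT⟩

end Profile

theorem stmt3_general (Γ α ν u₀ e₀ : ℝ) (hΓ : 0 < Γ) (hα : 0 < α) (hν : 0 < ν)
    (hu₀ : 0 < u₀) (c : ℝ × ℝ) (hc1 : c.1 < 0) (hc2 : c.2 < 0) :
    ∀ ε > (0:ℝ), ∃ δ > (0:ℝ), ∀ xs : ℝ, 0 < xs →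
      ∀ u e : ℝ → ℝ,
        IsProfileSol Γ α ν u₀ e₀ c u e (Set.Icc 0 xs) →
        (∀ x ∈ Set.Icc (0:ℝ) xs, 0 < u x ∧ 0 < e x) →
        u xs ≤ δ → e xs ≤ δ →
        ∃ xt ∈ Set.Icc xs (xs + ε), ∃ U E : ℝ → ℝ,
          IsProfileSol Γ α ν u₀ e₀ c U E (Set.Ico 0 xt) ∧
          (∀ x ∈ Set.Ico (0:ℝ) xt, 0 < U x ∧ 0 < E x) ∧
          (∀ x ∈ Set.Icc (0:ℝ) xs ∩ Set.Ico (0:ℝ) xt, U x = u x ∧ E x = e x) ∧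
          Filter.Tendsto E (nhdsWithin xt (Set.Ico 0 xt)) (nhds 0) := by
  intro ε hε
  obtain ⟨δ, hδ, H⟩ := exists_profile_extension (k₁ := u₀ / α) (k₂ := u₀ / ν) (by positivity)
    (by positivity) hΓ hc1 hc2 (u₀, e₀) ε hε
  refine ⟨δ, hδ, fun xs hxs u e hsol hpos hu he ↦ ?_⟩
  rw [isProfileSol_iff] at hsol
  obtain ⟨T, hT, γ, hγ, hγQ, heq, htend⟩ := H xs hxs _ ⟨hsol.1, hsol.2, hpos⟩ hu he
  refine ⟨T, hT, fun t ↦ (γ t).1, fun t ↦ (γ t).2, isProfileSol_iff.2 ⟨?_, hγ⟩, hγQ,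
    fun x hx ↦ Prod.ext_iff.1 (heq hx.1), htend⟩
  exact (heq ⟨le_rfl, hxs.le⟩).trans hsol.1

/-- Lemma small(iv): if `c₁, c₂ < 0` and a positive solution on `[0,x*]` has both components
at most `δ` at `x*`, then it extends to a positive solution on some `[0, x̃)` with
`x̃ ∈ [x*, x* + ε]` and `e(x) → 0` as `x → x̃⁻`; here `δ` depends only on `c₁, c₂, ε`
(and the fixed constants). -/
theorem stmt3 (Γ α ν u₀ e₀ : ℝ) (hΓ : 0 < Γ) (hα : 0 < α) (hν : 0 < ν)
    (hu₀ : 0 < u₀) (he₀ : 0 < e₀) (c : ℝ × ℝ) (hc1 : c.1 < 0) (hc2 : c.2 < 0) :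
    ∀ ε > (0:ℝ), ∃ δ > (0:ℝ), ∀ xs : ℝ, 0 < xs →
      ∀ u e : ℝ → ℝ,
        IsProfileSol Γ α ν u₀ e₀ c u e (Set.Icc 0 xs) →
        (∀ x ∈ Set.Icc (0:ℝ) xs, 0 < u x ∧ 0 < e x) →
        u xs ≤ δ → e xs ≤ δ →
        ∃ xt ∈ Set.Icc xs (xs + ε), ∃ U E : ℝ → ℝ,
          IsProfileSol Γ α ν u₀ e₀ c U E (Set.Ico 0 xt) ∧
          (∀ x ∈ Set.Ico (0:ℝ) xt, 0 < U x ∧ 0 < E x) ∧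
          (∀ x ∈ Set.Icc (0:ℝ) xs ∩ Set.Ico (0:ℝ) xt, U x = u x ∧ E x = e x) ∧
          Filter.Tendsto E (nhdsWithin xt (Set.Ico 0 xt)) (nhds 0) :=
  stmt3_general Γ α ν u₀ e₀ hΓ hα hν hu₀ c hc1 hc2
end
end

section
/- Define Ψ : 𝒞 → ℝ² by Ψ(c) = (u(1), e(1)), where (u,e) is the solution of the profile ODE on [0,1] corresponding to c ∈ 𝒞. Then Ψ is continuous on 𝒞, and Ψ extends to a continuous map on the closure of 𝒞; namely, there exists a continuous map Ψ̄ : cl(𝒞) → ℝ² with Ψ̄ = Ψ on 𝒞, where for c ∈ ∂𝒞, Ψ̄(c) = (u(1), 0) with (u,e) the continuous extension to [0,1] of the solution of the profile ODE for c (which satisfies e(1) = 0). -/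
noncomputable section

/-!
For `c` in a bounded set, positive solutions obey uniform a priori bounds: the energy
`α/2 u² + ν e` grows at most exponentially, a barrier keeps `u ≥ κ e`, and so the vector field
along the solution is bounded. Along an ultrafilter converging to `c₀ ∈ cl 𝒞` the solutions are
therefore equi-Lipschitz and converge uniformly; the limit solves the equation for `e`, solves
the equation for `u` where `u > 0`, and has `u > 0` where `e > 0`. Such extended solutions are
unique: two of them agree up to the first zero `σ` of `e`, where the field is locally Lipschitz;
`u σ > 0` is impossible for `σ < 1`, because `e` would have to reach `0` while `e' ≥ 0` just
before `σ`; and from `(0, 0)` the only continuation is zero. So all ultrafilter limits of the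
endpoint map agree, it extends continuously to `cl 𝒞`, and on `𝒞 ∪ ∂𝒞` the extension is read
off from the solution itself.
-/

open Set Filter Topology Metric
open scoped NNReal

theorem LipschitzOnWith.of_tendsto {ι X Y : Type*} [PseudoMetricSpace X] [PseudoMetricSpace Y]
    {l : Filter ι} [l.NeBot] {s : Set X} {L : ℝ≥0} {f : ι → X → Y} {g : X → Y}
    (hf : ∀ᶠ i in l, LipschitzOnWith L (f i) s)
    (hfg : ∀ x ∈ s, Tendsto (fun i => f i x) l (𝓝 (g x))) : LipschitzOnWith L g s :=
  LipschitzOnWith.of_dist_le_mul fun x hx y hy =>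
    le_of_tendsto ((hfg x hx).dist (hfg y hy)) (hf.mono fun _ hi => hi.dist_le_mul x hx y hy)

theorem tendstoUniformlyOn_of_lipschitzOnWith {ι X Y : Type*} [PseudoMetricSpace X]
    [PseudoMetricSpace Y] {l : Filter ι} {s : Set X} (hs : IsCompact s) {L : ℝ≥0}
    {f : ι → X → Y} {g : X → Y} (hf : ∀ᶠ i in l, LipschitzOnWith L (f i) s)
    (hg : LipschitzOnWith L g s) (hfg : ∀ x ∈ s, Tendsto (fun i => f i x) l (𝓝 (g x))) :
    TendstoUniformlyOn f g l s := by
  rw [Metric.tendstoUniformlyOn_iff]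
  intro ε hε
  have hδ : 0 < ε / (3 * (L + 1)) := by positivity
  have hLδ : L * (ε / (3 * (L + 1))) ≤ ε / 3 := by
    rw [mul_div_assoc', div_le_div_iff₀ (by positivity) (by norm_num)]
    nlinarith [L.2]
  obtain ⟨t, hts, htfin, hcover⟩ := finite_cover_balls_of_compact hs hδ
  have hnet : ∀ᶠ i in l, ∀ z ∈ t, dist (f i z) (g z) < ε / 3 :=
    htfin.eventually_all.2 fun z hz => Metric.tendsto_nhds.1 (hfg z (hts hz)) _ (by positivity)
  filter_upwards [hf, hnet] with i hfi hneti x hx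
  obtain ⟨z, hz, hxz⟩ := mem_iUnion₂.1 (hcover hx)
  have hLxz : L * dist x z ≤ ε / 3 :=
    (mul_le_mul_of_nonneg_left (mem_ball.1 hxz).le L.2).trans hLδ
  have hgxz := hg.dist_le_mul x hx z (hts hz)
  have hfxz := hfi.dist_le_mul z (hts hz) x hx
  have hz := hneti z hz
  rw [dist_comm z x] at hfxz
  rw [dist_comm] at hz
  linarith [dist_triangle4 (g x) (g z) (f i z) (f i x)]

theorem exists_tendstoUniformlyOn_of_lipschitzOnWith {ι X Y : Type*} [PseudoMetricSpace X]
    [PseudoMetricSpace Y] [Nonempty Y] (𝒰 : Ultrafilter ι) {s : Set X} (hs : IsCompact s)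
    {K : Set Y} (hK : IsCompact K) {L : ℝ≥0} {f : ι → X → Y}
    (hfK : ∀ᶠ i in 𝒰, MapsTo (f i) s K) (hf : ∀ᶠ i in 𝒰, LipschitzOnWith L (f i) s) :
    ∃ g : X → Y, TendstoUniformlyOn f g 𝒰 s := by
  have hlim : ∀ x ∈ s, ∃ y, Tendsto (fun i => f i x) 𝒰 (𝓝 y) := fun x hx =>
    let ⟨y, _, hy⟩ := hK.ultrafilter_le_nhds (𝒰.map (f · x))
      (le_principal_iff.2 (hfK.mono fun _ hi => hi hx))
    ⟨y, hy⟩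
  choose! g hg using hlim
  exact ⟨g, tendstoUniformlyOn_of_lipschitzOnWith hs hf (.of_tendsto hf hg) hg⟩

theorem TendstoUniformlyOn.eventually_mem_cthickening {ι X Y : Type*} [PseudoMetricSpace Y]
    {F : ι → X → Y} {f : X → Y} {l : Filter ι} {s : Set X} (h : TendstoUniformlyOn F f l s)
    {δ : ℝ} (hδ : 0 < δ) : ∀ᶠ i in l, ∀ x ∈ s, F i x ∈ cthickening δ (f '' s) :=
  (Metric.tendstoUniformlyOn_iff.1 h δ hδ).mono fun _ hi x hx =>
    mem_cthickening_of_dist_le _ _ _ _ (mem_image_of_mem f hx) (dist_comm (f x) _ ▸ (hi x hx).le)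

theorem Filter.Tendsto.tendstoUniformlyOn_prodMk {ι X Y Z : Type*} [UniformSpace Y]
    [UniformSpace Z] {l : Filter ι} {c : ι → Y} {c₀ : Y} (hc : Tendsto c l (𝓝 c₀))
    {F : ι → X → Z} {f : X → Z} {s : Set X} (h : TendstoUniformlyOn F f l s) :
    TendstoUniformlyOn (fun i x => (c i, F i x)) (fun x => (c₀, f x)) l s :=
  fun W hW => ((hc.tendstoUniformlyOn_const s).prodMk h W hW).diag_of_prod

theorem hasDerivAt_of_tendstoUniformlyOn_comp {ι Z G : Type*} [UniformSpace Z]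
    [NormedAddCommGroup G] [NormedSpace ℝ G] {l : Filter ι} [l.NeBot] {s : Set ℝ}
    (hs : IsOpen s) {K : Set Z} (hK : IsCompact K) {φ : Z → G} (hφ : ContinuousOn φ K)
    {q : ι → ℝ → Z} {q₀ : ℝ → Z} (hq : TendstoUniformlyOn q q₀ l s)
    (hqK : ∀ᶠ i in l, ∀ t ∈ s, q i t ∈ K) (hq₀K : ∀ t ∈ s, q₀ t ∈ K) {f : ι → ℝ → G}
    {f₀ : ℝ → G} (hf : ∀ᶠ i in l, ∀ t ∈ s, HasDerivAt (f i) (φ (q i t)) t)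
    (hf₀ : ∀ t ∈ s, Tendsto (fun i => f i t) l (𝓝 (f₀ t))) {t : ℝ} (ht : t ∈ s) :
    HasDerivAt f₀ (φ (q₀ t)) t :=
  hasDerivAt_of_tendstoUniformlyOn hs
    ((hK.uniformContinuousOn_of_continuous hφ).comp_tendstoUniformlyOn_eventually hqK hq₀K hq)
    hf hf₀ ht

/- Unlike `ODE_solution_unique_of_mem_Icc_right`, no derivative at the initial time `a` is
needed: Grönwall's bound on `[τ, t]` is passed to the limit `τ → a`. -/
theorem eqOn_Icc_of_hasDerivAt_Ioo {E : Type*} [NormedAddCommGroup E] [NormedSpace ℝ E]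
    {v : E → E} {U : Set E} (hv : LocallyLipschitzOn U v) {f g : ℝ → E} {a b : ℝ}
    (hf : ContinuousOn f (Icc a b)) (hg : ContinuousOn g (Icc a b))
    (hfU : MapsTo f (Icc a b) U) (hgU : MapsTo g (Icc a b) U)
    (hf' : ∀ t ∈ Ioo a b, HasDerivAt f (v (f t)) t)
    (hg' : ∀ t ∈ Ioo a b, HasDerivAt g (v (g t)) t) (ha : f a = g a) :
    EqOn f g (Icc a b) := by
  set K := f '' Icc a b ∪ g '' Icc a b
  obtain ⟨L, hL⟩ := (hv.mono (union_subset hfU.image_subset hgU.image_subset))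
    |>.exists_lipschitzOnWith_of_compact
      ((isCompact_Icc.image_of_continuousOn hf).union (isCompact_Icc.image_of_continuousOn hg))
  intro t ht
  rcases eq_or_lt_of_le ht.1 with rfl | hat
  · exact ha
  have hbound : ∀ τ ∈ Ioo a t,
      dist (f t) (g t) ≤ dist (f τ) (g τ) * Real.exp (L * (t - a)) := by
    intro τ hτ
    have hsub : Icc τ t ⊆ Icc a b := Icc_subset_Icc hτ.1.le ht.2
    have hsub' : Ico τ t ⊆ Ioo a b := fun x hx => ⟨hτ.1.trans_le hx.1, hx.2.trans_le ht.2⟩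
    have := dist_le_of_trajectories_ODE_of_mem (v := fun _ => v) (s := fun _ => K)
      (fun _ _ => hL) (hf.mono hsub) (fun x hx => (hf' x (hsub' hx)).hasDerivWithinAt)
      (fun x hx => Or.inl (mem_image_of_mem f (hsub (Ico_subset_Icc_self hx))))
      (hg.mono hsub) (fun x hx => (hg' x (hsub' hx)).hasDerivWithinAt)
      (fun x hx => Or.inr (mem_image_of_mem g (hsub (Ico_subset_Icc_self hx)))) le_rfl t
      ⟨hτ.2.le, le_rfl⟩
    refine this.trans (mul_le_mul_of_nonneg_left (Real.exp_le_exp.2 ?_) dist_nonneg)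
    exact mul_le_mul_of_nonneg_left (by linarith [hτ.1]) L.2
  have hs : Ioo a t ⊆ Icc a b := fun x hx => ⟨hx.1.le, hx.2.le.trans ht.2⟩
  have ha' : a ∈ Icc a b := ⟨le_rfl, hat.le.trans ht.2⟩
  have hlim : Tendsto (fun τ => dist (f τ) (g τ) * Real.exp (L * (t - a))) (𝓝[Ioo a t] a)
      (𝓝 (dist (f a) (g a) * Real.exp (L * (t - a)))) :=
    (((hf a ha').mono hs).dist ((hg a ha').mono hs)).mul_const _
  rw [ha, dist_self, zero_mul] at hlim
  have := left_nhdsWithin_Ioo_neBot hat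
  exact dist_le_zero.1 (ge_of_tendsto hlim (eventually_nhdsWithin_of_forall hbound))

theorem ContinuousOn.exists_forall_pos_Ico {f : ℝ → ℝ} {a b : ℝ} (hab : a < b)
    (hf : ContinuousOn f (Icc a b)) (ha : 0 < f a) :
    ∃ σ ∈ Ioc a b, (∀ t ∈ Ico a σ, 0 < f t) ∧ (σ = b ∨ f σ ≤ 0) := by
  set S := Icc a b ∩ f ⁻¹' Iic 0
  rcases S.eq_empty_or_nonempty with hS | hS
  · refine ⟨b, ⟨hab, le_rfl⟩, fun t ht => ?_, Or.inl rfl⟩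
    by_contra! h
    exact hS.subset ⟨Ico_subset_Icc_self ht, h⟩
  have hSc : IsCompact S := isCompact_Icc.of_isClosed_subset
    (hf.preimage_isClosed_of_isClosed isClosed_Icc isClosed_Iic) inter_subset_left
  have hσ : sInf S ∈ S := hSc.sInf_mem hS
  refine ⟨sInf S, ⟨lt_of_le_of_ne hσ.1.1 fun h => ?_, hσ.1.2⟩, fun t ht => ?_, Or.inr hσ.2⟩
  · exact absurd (h ▸ hσ.2) (not_le.2 ha)
  · by_contra! h
    exact absurd (csInf_le hSc.bddBelow ⟨⟨ht.1, ht.2.le.trans hσ.1.2⟩, h⟩) (not_le.2 ht.2)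

theorem HasDerivWithinAt.Ici_of_Icc {f : ℝ → ℝ} {f' a b t : ℝ}
    (h : HasDerivWithinAt f f' (Icc a b) t) (ht : t ∈ Ico a b) : HasDerivWithinAt f f' (Ici t) t :=
  (h.mono (Icc_subset_Icc_left ht.1)).mono_of_mem_nhdsWithin (Icc_mem_nhdsGE ht.2)

structure ProfileParams where
  Γ : ℝ
  α : ℝ
  ν : ℝ
  u₀ : ℝ
  e₀ : ℝ
  Γ_pos : 0 < Γ
  α_pos : 0 < α
  ν_pos : 0 < ν
  u₀_pos : 0 < u₀
  e₀_pos : 0 < e₀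

namespace ProfileParams

variable (P : ProfileParams)

def fieldU (c p : ℝ × ℝ) : ℝ := P.u₀ / P.α * (c.1 + p.1 + P.Γ * p.2 / p.1)

def fieldE (c p : ℝ × ℝ) : ℝ := P.u₀ / P.ν * (c.2 - c.1 * p.1 - p.1 ^ 2 / 2 + p.2)

def field (c p : ℝ × ℝ) : ℝ × ℝ := (P.fieldU c p, P.fieldE c p)

theorem locallyLipschitzOn_field (c : ℝ × ℝ) :
    LocallyLipschitzOn {p : ℝ × ℝ | 0 < p.1} (P.field c) := by
  refine ContDiffOn.locallyLipschitzOn (convex_halfSpace_gt (LinearMap.fst ℝ ℝ ℝ).isLinear 0) ?_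
  have hne : ∀ p ∈ {p : ℝ × ℝ | 0 < p.1}, p.1 ≠ 0 := fun p hp => ne_of_gt hp
  unfold field fieldU fieldE
  fun_prop (disch := assumption)

theorem continuousOn_fieldU {K : Set ((ℝ × ℝ) × (ℝ × ℝ))} (hK : ∀ q ∈ K, q.2.1 ≠ 0) :
    ContinuousOn (fun q => P.fieldU q.1 q.2) K := by
  unfold fieldU
  fun_prop (disch := assumption)

theorem continuous_fieldE : Continuous (fun q : (ℝ × ℝ) × (ℝ × ℝ) => P.fieldE q.1 q.2) := by
  unfold fieldE
  fun_prop

def IsPosSol (c : ℝ × ℝ) (u e : ℝ → ℝ) : Prop :=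
  IsProfileSol P.Γ P.α P.ν P.u₀ P.e₀ c u e (Icc 0 1) ∧ ∀ x ∈ Icc (0:ℝ) 1, 0 < u x ∧ 0 < e x

/-- A solution continued through the first zero of `e`: the equation for `u` is only required
where `u > 0`. Classical solutions and uniform limits of positive solutions are of this kind. -/
structure IsExtendedSol (c : ℝ × ℝ) (u e : ℝ → ℝ) : Prop where
  continuousOn_u : ContinuousOn u (Icc 0 1)
  continuousOn_e : ContinuousOn e (Icc 0 1)
  u_zero : u 0 = P.u₀
  e_zero : e 0 = P.e₀
  nonneg : ∀ t ∈ Ico (0:ℝ) 1, 0 ≤ u t ∧ 0 ≤ e t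
  pos_of_pos : ∀ t ∈ Ico (0:ℝ) 1, 0 < e t → 0 < u t
  hasDerivAt_u : ∀ t ∈ Ioo (0:ℝ) 1, 0 < u t → HasDerivAt u (P.fieldU c (u t, e t)) t
  hasDerivAt_e : ∀ t ∈ Ioo (0:ℝ) 1, HasDerivAt e (P.fieldE c (u t, e t)) t

variable {P} {c : ℝ × ℝ} {u e : ℝ → ℝ}

theorem isExtendedSol_of_isProfileSol {S : Set ℝ} (hS : Ioo 0 1 ⊆ S)
    (hu : ContinuousOn u (Icc 0 1)) (he : ContinuousOn e (Icc 0 1))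
    (h : IsProfileSol P.Γ P.α P.ν P.u₀ P.e₀ c u e S)
    (hpos : ∀ t ∈ Ico (0:ℝ) 1, 0 < u t ∧ 0 < e t) : P.IsExtendedSol c u e where
  continuousOn_u := hu
  continuousOn_e := he
  u_zero := h.1
  e_zero := h.2.1
  nonneg t ht := ⟨(hpos t ht).1.le, (hpos t ht).2.le⟩
  pos_of_pos t ht _ := (hpos t ht).1
  hasDerivAt_u t ht _ :=
    (h.2.2 t (hS ht)).1.hasDerivAt (mem_of_superset (Ioo_mem_nhds ht.1 ht.2) hS)
  hasDerivAt_e t ht :=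
    (h.2.2 t (hS ht)).2.hasDerivAt (mem_of_superset (Ioo_mem_nhds ht.1 ht.2) hS)

namespace IsPosSol

theorem hasDerivWithinAt_u (h : P.IsPosSol c u e) {t : ℝ} (ht : t ∈ Icc (0:ℝ) 1) :
    HasDerivWithinAt u (P.fieldU c (u t, e t)) (Icc 0 1) t := (h.1.2.2 t ht).1

theorem hasDerivWithinAt_e (h : P.IsPosSol c u e) {t : ℝ} (ht : t ∈ Icc (0:ℝ) 1) :
    HasDerivWithinAt e (P.fieldE c (u t, e t)) (Icc 0 1) t := (h.1.2.2 t ht).2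

theorem continuousOn_u (h : P.IsPosSol c u e) : ContinuousOn u (Icc 0 1) :=
  fun _ ht => (h.hasDerivWithinAt_u ht).continuousWithinAt

theorem continuousOn_e (h : P.IsPosSol c u e) : ContinuousOn e (Icc 0 1) :=
  fun _ ht => (h.hasDerivWithinAt_e ht).continuousWithinAt

theorem isExtendedSol (h : P.IsPosSol c u e) : P.IsExtendedSol c u e :=
  isExtendedSol_of_isProfileSol Ioo_subset_Icc_self h.continuousOn_u h.continuousOn_e h.1
    fun t ht => h.2 t (Ico_subset_Icc_self ht)

theorem hasDerivWithinAt_energy (h : P.IsPosSol c u e) {t : ℝ} (ht : t ∈ Icc (0:ℝ) 1) :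
    HasDerivWithinAt (fun s => P.α / 2 * u s ^ 2 + P.ν * e s)
      (P.u₀ * (c.2 + u t ^ 2 / 2 + (P.Γ + 1) * e t)) (Icc 0 1) t := by
  refine (((h.hasDerivWithinAt_u ht).pow 2).const_mul (P.α / 2)).add
    ((h.hasDerivWithinAt_e ht).const_mul P.ν) |>.congr_deriv ?_
  have := (h.2 t ht).1.ne'
  have := P.α_pos.ne'
  have := P.ν_pos.ne'
  simp only [fieldU, fieldE]
  field_simp
  ring

/- On the line `u = κ e` the term `Γ e / u` equals `Γ / κ`, which is large enough to make
`(κ e - u)' < 0` there. -/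
theorem mul_e_le_u (h : P.IsPosSol c u e) {R D κ : ℝ} (hc : ‖c‖ ≤ R)
    (hD : ∀ t ∈ Icc (0:ℝ) 1, |P.fieldE c (u t, e t)| ≤ D) (hκ : 0 < κ)
    (hκe : κ * P.e₀ ≤ P.u₀) (hκD : κ * D < P.u₀ / P.α * (P.Γ / κ - R)) :
    ∀ t ∈ Icc (0:ℝ) 1, κ * e t ≤ u t := by
  have hc₁ : -R ≤ c.1 := (abs_le.1 ((norm_fst_le c).trans hc)).1
  have key := image_le_of_deriv_right_lt_deriv_boundary (a := 0) (b := 1)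
    (f := fun s => κ * e s - u s)
    (f' := fun s => κ * P.fieldE c (u s, e s) - P.fieldU c (u s, e s))
    (B := fun _ => 0) (B' := fun _ => 0)
    ((continuousOn_const.mul h.continuousOn_e).sub h.continuousOn_u)
    (fun x hx => (((h.hasDerivWithinAt_e (Ico_subset_Icc_self hx)).const_mul κ).sub
      (h.hasDerivWithinAt_u (Ico_subset_Icc_self hx))).Ici_of_Icc hx)
    (by simp only [h.1.1, h.1.2.1]; linarith) (fun _ => hasDerivAt_const _ _) ?_
  · exact fun t ht => sub_nonpos.1 (key ht)
  intro x hx hbd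
  have hx' := Ico_subset_Icc_self hx
  have hux : u x = κ * e x := by linarith
  have hpos := h.2 x hx'
  have hratio : P.Γ * e x / u x = P.Γ / κ := by
    rw [hux]; field_simp [hpos.2.ne', hκ.ne']
  have hFu : P.u₀ / P.α * (P.Γ / κ - R) ≤ P.fieldU c (u x, e x) := by
    simp only [fieldU, hratio]
    exact mul_le_mul_of_nonneg_left (by linarith [hpos.1]) (div_pos P.u₀_pos P.α_pos).le
  have hFe : κ * P.fieldE c (u x, e x) ≤ κ * D :=
    mul_le_mul_of_nonneg_left ((le_abs_self _).trans (hD x hx')) hκ.le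
  linarith

end IsPosSol

variable (P) in
theorem exists_energy_bound (R : ℝ) : ∃ B, ∀ c : ℝ × ℝ, ‖c‖ ≤ R → ∀ u e, P.IsPosSol c u e →
    ∀ t ∈ Icc (0:ℝ) 1, P.α / 2 * u t ^ 2 + P.ν * e t ≤ B := by
  set K := P.u₀ / P.α + P.u₀ * (P.Γ + 1) / P.ν
  set W₀ := P.α / 2 * P.u₀ ^ 2 + P.ν * P.e₀
  have hcont : Continuous (gronwallBound W₀ K (P.u₀ * R)) :=
    continuous_iff_continuousAt.2 fun x => (hasDerivAt_gronwallBound _ _ _ x).continuousAt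
  obtain ⟨B, hB⟩ := (isCompact_Icc (a := (0:ℝ)) (b := 1)).bddAbove_image hcont.continuousOn
  refine ⟨B, fun c hc u e h t ht => ?_⟩
  have hgr := le_gronwallBound_of_liminf_deriv_right_le (a := 0) (b := 1) (δ := W₀) (K := K)
    (ε := P.u₀ * R) (f' := fun s => P.u₀ * (c.2 + u s ^ 2 / 2 + (P.Γ + 1) * e s))
    (fun s hs => (h.hasDerivWithinAt_energy hs).continuousWithinAt)
    (fun x hx r hr => ((h.hasDerivWithinAt_energy (Ico_subset_Icc_self hx)).Ici_of_Icc hx)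
      |>.liminf_right_slope_le hr)
    (by simp only [h.1.1, h.1.2.1]; rfl) ?_ t ht
  · rw [sub_zero] at hgr
    exact hgr.trans (hB (mem_image_of_mem _ ht))
  intro x hx
  have hpos := h.2 x (Ico_subset_Icc_self hx)
  have hc₂ : c.2 ≤ R := (le_abs_self _).trans ((norm_snd_le c).trans hc)
  have hK : K * (P.α / 2 * u x ^ 2 + P.ν * e x) = P.u₀ * (u x ^ 2 / 2 + (P.Γ + 1) * e x)
      + (P.u₀ * P.ν / P.α * e x + P.u₀ * (P.Γ + 1) * P.α / (2 * P.ν) * u x ^ 2) := by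
    have := P.α_pos.ne'
    have := P.ν_pos.ne'
    simp only [K]
    field_simp
    ring
  have hrest : 0 ≤ P.u₀ * P.ν / P.α * e x + P.u₀ * (P.Γ + 1) * P.α / (2 * P.ν) * u x ^ 2 := by
    have := P.u₀_pos; have := P.ν_pos; have := P.α_pos; have := P.Γ_pos; have := hpos.2
    positivity
  nlinarith [P.u₀_pos]

theorem abs_fieldE_le {c p : ℝ × ℝ} {R U E : ℝ} (hc : ‖c‖ ≤ R) (hu : p.1 ∈ Icc 0 U)
    (he : p.2 ∈ Icc 0 E) : |P.fieldE c p| ≤ P.u₀ / P.ν * (R + R * U + U ^ 2 / 2 + E) := by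
  have h₁ := abs_le.1 ((norm_fst_le c).trans hc)
  have h₂ := abs_le.1 ((norm_snd_le c).trans hc)
  have hR : 0 ≤ R := (norm_nonneg c).trans hc
  have hk := div_pos P.u₀_pos P.ν_pos
  rw [fieldE, abs_mul, abs_of_pos hk]
  refine mul_le_mul_of_nonneg_left (abs_le.2 ⟨?_, ?_⟩) hk.le
  · nlinarith [mul_le_mul h₁.2 hu.2 hu.1 hR, hu.1, hu.2, he.1, he.2]
  · nlinarith [mul_le_mul (neg_le.1 h₁.1) hu.2 hu.1 hR, hu.1, hu.2, he.1, he.2]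

theorem abs_fieldU_le {c p : ℝ × ℝ} {R U κ : ℝ} (hc : ‖c‖ ≤ R) (hu : p.1 ∈ Ioc 0 U)
    (he : 0 ≤ p.2) (hκ : 0 < κ) (hκp : κ * p.2 ≤ p.1) :
    |P.fieldU c p| ≤ P.u₀ / P.α * (R + U + P.Γ / κ) := by
  have h₁ := abs_le.1 ((norm_fst_le c).trans hc)
  have hk := div_pos P.u₀_pos P.α_pos
  have hratio : P.Γ * p.2 / p.1 ≤ P.Γ / κ := by
    rw [div_le_div_iff₀ hu.1 hκ]
    nlinarith [P.Γ_pos]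
  have hratio₀ : 0 ≤ P.Γ * p.2 / p.1 := div_nonneg (mul_nonneg P.Γ_pos.le he) hu.1.le
  rw [fieldU, abs_mul, abs_of_pos hk]
  refine mul_le_mul_of_nonneg_left (abs_le.2 ⟨?_, ?_⟩) hk.le
  · nlinarith [hu.1, hu.2, P.Γ_pos, div_pos P.Γ_pos hκ]
  · nlinarith [hu.1, hu.2]

variable (P) in
theorem exists_uniform_bounds (R : ℝ) : ∃ U E κ M : ℝ, 0 < κ ∧ ∀ c : ℝ × ℝ, ‖c‖ ≤ R →
    ∀ u e, P.IsPosSol c u e → ∀ t ∈ Icc (0:ℝ) 1,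
      u t ≤ U ∧ e t ≤ E ∧ κ * e t ≤ u t ∧ ‖P.field c (u t, e t)‖ ≤ M := by
  obtain ⟨B, hB⟩ := P.exists_energy_bound R
  set U := √(2 * B / P.α)
  set E := B / P.ν
  have hUE : ∀ c : ℝ × ℝ, ‖c‖ ≤ R → ∀ u e, P.IsPosSol c u e → ∀ t ∈ Icc (0:ℝ) 1,
      u t ∈ Ioc 0 U ∧ e t ∈ Icc 0 E := by
    intro c hc u e h t ht
    have hW := hB c hc u e h t ht
    have hpos := h.2 t ht
    have := P.α_pos; have := P.ν_pos
    refine ⟨⟨hpos.1, Real.le_sqrt_of_sq_le ?_⟩, hpos.2.le, ?_⟩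
    · rw [le_div_iff₀ P.α_pos]; nlinarith
    · rw [le_div_iff₀ P.ν_pos]; nlinarith
  set k₁ := P.u₀ / P.α
  have hk₁ : 0 < k₁ := div_pos P.u₀_pos P.α_pos
  set D := P.u₀ / P.ν * (R + R * U + U ^ 2 / 2 + E)
  set κ := min (P.u₀ / P.e₀) (min 1 (P.Γ / (|R| + |D| / k₁ + 1)))
  have hden : 0 < |R| + |D| / k₁ + 1 := by positivity
  have hκ : 0 < κ := lt_min (div_pos P.u₀_pos P.e₀_pos) (lt_min one_pos (div_pos P.Γ_pos hden))
  have hκe : κ * P.e₀ ≤ P.u₀ := (le_div_iff₀ P.e₀_pos).1 (min_le_left _ _)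
  have hκD : κ * D < k₁ * (P.Γ / κ - R) := by
    have h₁ : κ ≤ 1 := (min_le_right _ _).trans (min_le_left _ _)
    have h₂ : |R| + |D| / k₁ + 1 ≤ P.Γ / κ :=
      (le_div_iff₀ hκ).2 ((le_div_iff₀' hden).1 ((min_le_right _ _).trans (min_le_right _ _)))
    have h₃ : k₁ * (|D| / k₁) = |D| := mul_div_cancel₀ _ hk₁.ne'
    have h₄ : κ * D ≤ |D| := by nlinarith [le_abs_self D, abs_nonneg D]
    nlinarith [le_abs_self R]
  refine ⟨U, E, κ, max (k₁ * (R + U + P.Γ / κ)) D, hκ, fun c hc u e h t ht => ?_⟩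
  have hbd := hUE c hc u e h
  have hD : ∀ s ∈ Icc (0:ℝ) 1, |P.fieldE c (u s, e s)| ≤ D := fun s hs =>
    P.abs_fieldE_le hc (Ioc_subset_Icc_self (hbd s hs).1) (hbd s hs).2
  have hbar := h.mul_e_le_u hc hD hκ hκe hκD t ht
  refine ⟨(hbd t ht).1.2, (hbd t ht).2.2, hbar, ?_⟩
  rw [Prod.norm_def, Real.norm_eq_abs, Real.norm_eq_abs]
  exact max_le_max (P.abs_fieldU_le hc (hbd t ht).1 (hbd t ht).2.1 hκ hbar) (hD t ht)

namespace IsExtendedSol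

theorem hasDerivAt (h : P.IsExtendedSol c u e) {t : ℝ} (ht : t ∈ Ioo (0:ℝ) 1) (hu : 0 < u t) :
    HasDerivAt (fun s => (u s, e s)) (P.field c (u t, e t)) t :=
  (h.hasDerivAt_u t ht hu).prodMk (h.hasDerivAt_e t ht)

theorem continuousOn (h : P.IsExtendedSol c u e) :
    ContinuousOn (fun s => (u s, e s)) (Icc 0 1) :=
  h.continuousOn_u.prodMk h.continuousOn_e

theorem hasDerivAt_fieldE (h : P.IsExtendedSol c u e) {t : ℝ} (ht : t ∈ Ioo (0:ℝ) 1)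
    (hu : 0 < u t) : HasDerivAt (fun s => P.fieldE c (u s, e s))
      (P.u₀ / P.ν * (P.fieldE c (u t, e t) - (c.1 + u t) * P.fieldU c (u t, e t))) t := by
  have hu' := h.hasDerivAt_u t ht hu
  refine ((((hasDerivAt_const t c.2).sub (hu'.const_mul c.1)).sub ((hu'.pow 2).div_const 2)).add
    (h.hasDerivAt_e t ht)).const_mul (P.u₀ / P.ν) |>.congr_deriv ?_
  ring

theorem fieldE_eq_zero (h : P.IsExtendedSol c u e) {σ : ℝ} (hσ : σ ∈ Ioo (0:ℝ) 1)
    (heσ : e σ = 0) : P.fieldE c (u σ, e σ) = 0 := by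
  have hmin : IsLocalMin e σ := by
    filter_upwards [Ioo_mem_nhds hσ.1 hσ.2] with t ht
    rw [heσ]
    exact (h.nonneg t (Ioo_subset_Ico_self ht)).2
  exact hmin.hasDerivAt_eq_zero (h.hasDerivAt_e σ hσ)

theorem eventuallyEq_of_field_eq_zero (h : P.IsExtendedSol c u e) {σ : ℝ}
    (hσ : σ ∈ Ioo (0:ℝ) 1) (hu : 0 < u σ) (hF : P.field c (u σ, e σ) = 0) :
    (fun t => (u t, e t)) =ᶠ[𝓝 σ] fun _ => (u σ, e σ) := by
  obtain ⟨K, s, hs, hK⟩ := P.locallyLipschitzOn_field c (show 0 < (u σ, e σ).1 from hu)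
  rw [(isOpen_lt continuous_const continuous_fst).nhdsWithin_eq hu] at hs
  have hnear : ∀ᶠ t in 𝓝 σ, (t ∈ Ioo (0:ℝ) 1 ∧ 0 < u t) ∧ (u t, e t) ∈ s :=
    ((show ∀ᶠ t in 𝓝 σ, t ∈ Ioo (0:ℝ) 1 from Ioo_mem_nhds hσ.1 hσ.2).and
      ((h.continuousOn_u.continuousAt (Icc_mem_nhds hσ.1 hσ.2)).eventually (lt_mem_nhds hu))).and
      ((h.continuousOn.continuousAt (Icc_mem_nhds hσ.1 hσ.2)).eventually hs)
  exact ODE_solution_unique_of_eventually (v := fun _ => P.field c) (s := fun _ => s)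
    (Eventually.of_forall fun _ => hK) (hnear.mono fun t ht => ⟨h.hasDerivAt ht.1.1 ht.1.2, ht.2⟩)
    (Eventually.of_forall fun _ => ⟨hF ▸ hasDerivAt_const _ _, mem_of_mem_nhds hs⟩) rfl

theorem not_eventually_fieldE_nonneg (h : P.IsExtendedSol c u e) {σ : ℝ}
    (hσ : σ ∈ Ioo (0:ℝ) 1) (heσ : e σ = 0) (hpos : ∀ t ∈ Ico 0 σ, 0 < e t) :
    ¬ ∀ᶠ t in 𝓝[<] σ, 0 ≤ P.fieldE c (u t, e t) := by
  intro hev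
  obtain ⟨l, hl, hsub⟩ := mem_nhdsLT_iff_exists_Ioo_subset.1 (hev.and (Ioo_mem_nhdsLT hσ.1))
  obtain ⟨τ, hlτ, hτσ⟩ := exists_between (mem_Iio.1 hl)
  have hτ : τ ∈ Ioo 0 σ := (hsub ⟨hlτ, hτσ⟩).2
  have hmono : MonotoneOn e (Icc τ σ) := by
    refine monotoneOn_of_hasDerivWithinAt_nonneg (f' := fun x => P.fieldE c (u x, e x))
      (convex_Icc τ σ) (h.continuousOn_e.mono (Icc_subset_Icc hτ.1.le hσ.2.le))
      (fun x hx => ?_) (fun x hx => ?_)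
    · rw [interior_Icc] at hx ⊢
      exact (h.hasDerivAt_e x ⟨hτ.1.trans hx.1, hx.2.trans hσ.2⟩).hasDerivWithinAt
    · rw [interior_Icc] at hx
      exact (hsub ⟨hlτ.trans hx.1, hx.2⟩).1
  have := hmono (left_mem_Icc.2 hτσ.le) (right_mem_Icc.2 hτσ.le) hτσ.le
  linarith [hpos τ (Ioo_subset_Ico_self hτ)]

/- Since `e' (σ) = 0` and `e σ = 0`, the point `(u σ, 0)` is an equilibrium when
`c₁ + u σ = 0`, and otherwise `e'' (σ) = -(u₀/ν)(u₀/α)(c₁ + u σ)² < 0`. Either way `e' ≥ 0`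
just before `σ`. -/
theorem u_eq_zero_of_e_eq_zero (h : P.IsExtendedSol c u e) {σ : ℝ} (hσ : σ ∈ Ioo (0:ℝ) 1)
    (heσ : e σ = 0) (hpos : ∀ t ∈ Ico 0 σ, 0 < e t) : u σ = 0 := by
  by_contra hne
  have huσ : 0 < u σ := lt_of_le_of_ne (h.nonneg σ (Ioo_subset_Ico_self hσ)).1 (Ne.symm hne)
  apply h.not_eventually_fieldE_nonneg hσ heσ hpos
  have hE := h.fieldE_eq_zero hσ heσ
  have hU : P.fieldU c (u σ, e σ) = P.u₀ / P.α * (c.1 + u σ) := by simp [fieldU, heσ]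
  by_cases hA : c.1 + u σ = 0
  · have hF : P.field c (u σ, e σ) = 0 := by simp [field, hE, hU, hA]
    filter_upwards [nhdsWithin_le_nhds (h.eventuallyEq_of_field_eq_zero hσ huσ hF)] with t ht
    simp only [Prod.mk.injEq] at ht
    rw [ht.1, ht.2, hE]
  have hneg : deriv (fun t => P.fieldE c (u t, e t)) σ < 0 := by
    rw [(h.hasDerivAt_fieldE hσ huσ).deriv, hE, hU]
    have := div_pos P.u₀_pos P.ν_pos
    have := div_pos P.u₀_pos P.α_pos
    have : 0 < (c.1 + u σ) ^ 2 := by positivity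
    have : 0 < P.u₀ / P.ν * (P.u₀ / P.α * (c.1 + u σ) ^ 2) := by positivity
    nlinarith
  filter_upwards [nhdsWithin_le_nhds (eventually_nhdsWithin_sign_eq_of_deriv_neg hneg hE),
    self_mem_nhdsWithin] with t ht htσ
  exact (sign_eq_one_iff.1 (ht.trans (sign_eq_one_iff.2 (sub_pos.2 htσ)))).le

theorem snd_eq_zero_and_fst_nonneg (h : P.IsExtendedSol c u e) {σ : ℝ}
    (hσ : σ ∈ Ioo (0:ℝ) 1) (heσ : e σ = 0) (huσ : u σ = 0) (hpos : ∀ t ∈ Ico 0 σ, 0 < e t) :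
    c.2 = 0 ∧ 0 ≤ c.1 := by
  have hk : 0 < P.u₀ / P.ν := div_pos P.u₀_pos P.ν_pos
  have hc₂ : c.2 = 0 := by
    have := h.fieldE_eq_zero hσ heσ
    simp only [fieldE, heσ, huσ] at this
    simpa [hk.ne'] using this
  refine ⟨hc₂, ?_⟩
  by_contra! hc₁
  apply h.not_eventually_fieldE_nonneg hσ heσ hpos
  have hsmall : ∀ᶠ t in 𝓝 σ, u t < -c.1 :=
    (h.continuousOn_u.continuousAt (Icc_mem_nhds hσ.1 hσ.2)).eventually
      (gt_mem_nhds (by rw [huσ]; linarith))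
  filter_upwards [nhdsWithin_le_nhds hsmall, nhdsWithin_le_nhds (Ioo_mem_nhds hσ.1 hσ.2)]
    with t ht ht'
  have := h.nonneg t (Ioo_subset_Ico_self ht')
  simp only [fieldE, hc₂]
  exact mul_nonneg hk.le (by nlinarith [this.1, this.2])

theorem eq_zero_of_u_e_eq_zero (h : P.IsExtendedSol c u e) {σ : ℝ} (hσ : σ ∈ Ioo (0:ℝ) 1)
    (heσ : e σ = 0) (huσ : u σ = 0) (hpos : ∀ t ∈ Ico 0 σ, 0 < e t) :
    ∀ t ∈ Ico σ 1, u t = 0 ∧ e t = 0 := by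
  obtain ⟨hc₂, hc₁⟩ := h.snd_eq_zero_and_fst_nonneg hσ heσ huσ hpos
  have hk : 0 < P.u₀ / P.ν := div_pos P.u₀_pos P.ν_pos
  have hnonneg : ∀ t ∈ Ico σ 1, 0 ≤ u t ∧ 0 ≤ e t := fun t ht =>
    h.nonneg t ⟨hσ.1.le.trans ht.1, ht.2⟩
  have he : ∀ t ∈ Ico σ 1, e t = 0 := by
    intro t ht
    have hgr := le_gronwallBound_of_liminf_deriv_right_le (a := σ) (b := 1) (δ := 0)
      (K := P.u₀ / P.ν) (ε := 0) (f := e) (f' := fun s => P.fieldE c (u s, e s))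
      (h.continuousOn_e.mono (Icc_subset_Icc_left hσ.1.le))
      (fun x hx r hr => (h.hasDerivAt_e x ⟨hσ.1.trans_le hx.1, hx.2⟩).hasDerivWithinAt
        |>.liminf_right_slope_le hr) heσ.le
      (fun x hx => by
        have := hnonneg x hx
        simp only [fieldE, hc₂]
        nlinarith [mul_nonneg hc₁ this.1, mul_nonneg this.1 this.1])
      t (Ico_subset_Icc_self ht)
    rw [gronwallBound_ε0_δ0] at hgr
    exact le_antisymm hgr (hnonneg t ht).2
  intro t ht
  refine ⟨?_, he t ht⟩
  rcases eq_or_lt_of_le ht.1 with rfl | hσt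
  · exact huσ
  have hzero : HasDerivAt e 0 t := (hasDerivAt_const t (0:ℝ)).congr_of_eventuallyEq
    (eventually_of_mem (Ioo_mem_nhds hσt ht.2) fun s hs => he s (Ioo_subset_Ico_self hs))
  have hFe := (h.hasDerivAt_e t ⟨hσ.1.trans hσt, ht.2⟩).unique hzero
  simp only [fieldE, hc₂, he t ht] at hFe
  have : u t * (c.1 + u t / 2) = 0 := by
    have := (mul_eq_zero.1 hFe).resolve_left hk.ne'
    linarith
  nlinarith [mul_nonneg hc₁ (hnonneg t ht).1]

theorem eqOn_Icc_of_pos {u₁ e₁ u₂ e₂ : ℝ → ℝ} (h₁ : P.IsExtendedSol c u₁ e₁)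
    (h₂ : P.IsExtendedSol c u₂ e₂) {b : ℝ} (hb : b ≤ 1)
    (hu : ∀ s ∈ Icc 0 b, 0 < u₁ s ∧ 0 < u₂ s) :
    EqOn (fun t => (u₁ t, e₁ t)) (fun t => (u₂ t, e₂ t)) (Icc 0 b) :=
  eqOn_Icc_of_hasDerivAt_Ioo (P.locallyLipschitzOn_field c)
    (h₁.continuousOn.mono (Icc_subset_Icc_right hb))
    (h₂.continuousOn.mono (Icc_subset_Icc_right hb))
    (fun s hs => (hu s hs).1) (fun s hs => (hu s hs).2)
    (fun s hs => h₁.hasDerivAt ⟨hs.1, hs.2.trans_le hb⟩ (hu s (Ioo_subset_Icc_self hs)).1)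
    (fun s hs => h₂.hasDerivAt ⟨hs.1, hs.2.trans_le hb⟩ (hu s (Ioo_subset_Icc_self hs)).2)
    (by simp [h₁.u_zero, h₁.e_zero, h₂.u_zero, h₂.e_zero])

theorem eqOn {u₁ e₁ u₂ e₂ : ℝ → ℝ} (h₁ : P.IsExtendedSol c u₁ e₁) (h₂ : P.IsExtendedSol c u₂ e₂) :
    EqOn (fun t => (u₁ t, e₁ t)) (fun t => (u₂ t, e₂ t)) (Icc 0 1) := by
  obtain ⟨σ, hσ, hpos, hσ'⟩ := (h₁.continuousOn_e.inf h₂.continuousOn_e).exists_forall_pos_Ico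
    one_pos (by simp [h₁.e_zero, h₂.e_zero, P.e₀_pos])
  have hpos' : ∀ t ∈ Ico 0 σ, 0 < e₁ t ∧ 0 < e₂ t := fun t ht => lt_inf_iff.1 (hpos t ht)
  have hagree : EqOn (fun t => (u₁ t, e₁ t)) (fun t => (u₂ t, e₂ t)) (Ico 0 σ) := fun t ht =>
    h₁.eqOn_Icc_of_pos h₂ (ht.2.le.trans hσ.2) (fun s hs =>
      have hs' : s ∈ Ico 0 σ := ⟨hs.1, hs.2.trans_lt ht.2⟩
      have hs₁ : s ∈ Ico (0:ℝ) 1 := ⟨hs.1, hs'.2.trans_le hσ.2⟩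
      ⟨h₁.pos_of_pos s hs₁ (hpos' s hs').1, h₂.pos_of_pos s hs₁ (hpos' s hs').2⟩)
      (right_mem_Icc.2 ht.1)
  suffices EqOn (fun t => (u₁ t, e₁ t)) (fun t => (u₂ t, e₂ t)) (Ico 0 1) from
    this.of_subset_closure h₁.continuousOn h₂.continuousOn Ico_subset_Icc_self
      (closure_Ico zero_ne_one).superset
  rcases eq_or_lt_of_le hσ.2 with rfl | hσ1
  · exact hagree
  have hσ₀ : σ ∈ Ioo (0:ℝ) 1 := ⟨hσ.1, hσ1⟩
  have hσeq := hagree.of_subset_closure (h₁.continuousOn.mono (Icc_subset_Icc_right hσ.2))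
    (h₂.continuousOn.mono (Icc_subset_Icc_right hσ.2)) Ico_subset_Icc_self
    (closure_Ico hσ.1.ne).superset (right_mem_Icc.2 hσ.1.le)
  obtain ⟨hu₁₂, he₁₂⟩ := Prod.mk.injEq _ _ _ _ ▸ hσeq
  have he₁ : e₁ σ = 0 := by
    have hmin := hσ'.resolve_left hσ1.ne
    have := (h₁.nonneg σ (Ioo_subset_Ico_self hσ₀)).2
    simp only [he₁₂, inf_idem] at hmin
    linarith
  have he₂ : e₂ σ = 0 := he₁₂ ▸ he₁
  have hu₁ := h₁.u_eq_zero_of_e_eq_zero hσ₀ he₁ fun t ht => (hpos' t ht).1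
  have hu₂ : u₂ σ = 0 := hu₁₂ ▸ hu₁
  intro t ht
  by_cases htσ : t < σ
  · exact hagree ⟨ht.1, htσ⟩
  have ht' : t ∈ Ico σ 1 := ⟨not_lt.1 htσ, ht.2⟩
  obtain ⟨hu₁t, he₁t⟩ := h₁.eq_zero_of_u_e_eq_zero hσ₀ he₁ hu₁ (fun s hs => (hpos' s hs).1) t ht'
  obtain ⟨hu₂t, he₂t⟩ := h₂.eq_zero_of_u_e_eq_zero hσ₀ he₂ hu₂ (fun s hs => (hpos' s hs).2) t ht'
  simp [hu₁t, he₁t, hu₂t, he₂t]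

end IsExtendedSol

section Limit

variable {ι : Type*} {l : Filter ι} [l.NeBot] {c : ι → ℝ × ℝ} {c₀ : ℝ × ℝ}
  {u e : ι → ℝ → ℝ} {u' e' : ℝ → ℝ}

theorem hasDerivAt_e_of_tendstoUniformlyOn (hc : Tendsto c l (𝓝 c₀))
    (hsol : ∀ᶠ i in l, P.IsPosSol (c i) (u i) (e i))
    (hlim : TendstoUniformlyOn (fun i t => (u i t, e i t)) (fun t => (u' t, e' t)) l (Icc 0 1))
    (hcont : ContinuousOn (fun t => (u' t, e' t)) (Icc 0 1)) {t : ℝ} (ht : t ∈ Ioo (0:ℝ) 1) :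
    HasDerivAt e' (P.fieldE c₀ (u' t, e' t)) t := by
  have hK : IsCompact (closedBall c₀ 1 ×ˢ cthickening 1 ((fun t => (u' t, e' t)) '' Icc 0 1)) :=
    (isCompact_closedBall c₀ 1).prod (isCompact_Icc.image_of_continuousOn hcont).cthickening
  refine hasDerivAt_of_tendstoUniformlyOn_comp isOpen_Ioo hK P.continuous_fieldE.continuousOn
    ((hc.tendstoUniformlyOn_prodMk hlim).mono Ioo_subset_Icc_self) ?_
    (fun s hs => ⟨mem_closedBall_self zero_le_one,
      self_subset_cthickening _ (mem_image_of_mem _ (Ioo_subset_Icc_self hs))⟩)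
    (hsol.mono fun _ hi s hs => hi.isExtendedSol.hasDerivAt_e s hs)
    (fun s hs => (continuous_snd.tendsto _).comp (hlim.tendsto_at (Ioo_subset_Icc_self hs))) ht
  filter_upwards [hc (closedBall_mem_nhds c₀ one_pos), hlim.eventually_mem_cthickening one_pos]
    with i hi₁ hi₂ s hs
  exact ⟨hi₁, hi₂ s (Ioo_subset_Icc_self hs)⟩

theorem hasDerivAt_u_of_tendstoUniformlyOn (hc : Tendsto c l (𝓝 c₀))
    (hsol : ∀ᶠ i in l, P.IsPosSol (c i) (u i) (e i))
    (hlim : TendstoUniformlyOn (fun i t => (u i t, e i t)) (fun t => (u' t, e' t)) l (Icc 0 1))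
    (hcont : ContinuousOn (fun t => (u' t, e' t)) (Icc 0 1)) {t : ℝ} (ht : t ∈ Ioo (0:ℝ) 1)
    (hu : 0 < u' t) : HasDerivAt u' (P.fieldU c₀ (u' t, e' t)) t := by
  set δ := u' t / 4
  have hδ : 0 < δ := by positivity
  set s := Ioo 0 1 ∩ u' ⁻¹' Ioi (2 * δ)
  have hs : IsOpen s := ((continuous_fst.comp_continuousOn hcont).mono Ioo_subset_Icc_self
    |>.isOpen_inter_preimage isOpen_Ioo isOpen_Ioi)
  have hsub : s ⊆ Icc 0 1 := fun _ hr => Ioo_subset_Icc_self hr.1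
  set K := cthickening δ ((fun t => (u' t, e' t)) '' Icc 0 1) ∩ {p | δ ≤ p.1}
  have hK : IsCompact (closedBall c₀ 1 ×ˢ K) := (isCompact_closedBall c₀ 1).prod
    ((isCompact_Icc.image_of_continuousOn hcont).cthickening.inter_right
      (isClosed_le continuous_const continuous_fst))
  have hclose : ∀ᶠ i in l, ∀ r ∈ s, (u i r, e i r) ∈ K := by
    filter_upwards [Metric.tendstoUniformlyOn_iff.1 hlim δ hδ] with i hi r hr
    have hr' := hi r (hsub hr)
    refine ⟨mem_cthickening_of_dist_le _ _ _ _ (mem_image_of_mem _ (hsub hr))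
      (dist_comm (u' r, e' r) _ ▸ hr'.le), ?_⟩
    rw [Prod.dist_eq, max_lt_iff, Real.dist_eq, abs_lt] at hr'
    have : 2 * δ < u' r := hr.2
    show δ ≤ u i r
    linarith [hr'.1.2]
  refine hasDerivAt_of_tendstoUniformlyOn_comp hs hK
    (P.continuousOn_fieldU fun q hq => (hδ.trans_le hq.2.2).ne')
    ((hc.tendstoUniformlyOn_prodMk hlim).mono hsub) ?_
    (fun r hr => ⟨mem_closedBall_self zero_le_one,
      self_subset_cthickening _ (mem_image_of_mem _ (hsub hr)),
      (by linarith [show 2 * δ < u' r from hr.2] : δ ≤ u' r)⟩)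
    ((hsol.and hclose).mono fun _ hi r hr =>
      hi.1.isExtendedSol.hasDerivAt_u r hr.1 (hδ.trans_le (hi.2 r hr).2))
    (fun r hr => (continuous_fst.tendsto _).comp (hlim.tendsto_at (hsub hr)))
    ⟨ht, by change 2 * (u' t / 4) < u' t; linarith⟩
  filter_upwards [hc (closedBall_mem_nhds c₀ one_pos), hclose] with i hi₁ hi₂ r hr
  exact ⟨hi₁, hi₂ r hr⟩

theorem isExtendedSol_of_tendstoUniformlyOn (hc : Tendsto c l (𝓝 c₀))
    (hsol : ∀ᶠ i in l, P.IsPosSol (c i) (u i) (e i)) {κ : ℝ} (hκ : 0 < κ)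
    (hbar : ∀ᶠ i in l, ∀ t ∈ Icc (0:ℝ) 1, κ * e i t ≤ u i t)
    (hlim : TendstoUniformlyOn (fun i t => (u i t, e i t)) (fun t => (u' t, e' t)) l (Icc 0 1)) :
    P.IsExtendedSol c₀ u' e' := by
  have hu_lim : ∀ t ∈ Icc (0:ℝ) 1, Tendsto (fun i => u i t) l (𝓝 (u' t)) := fun t ht =>
    (continuous_fst.tendsto _).comp (hlim.tendsto_at ht)
  have he_lim : ∀ t ∈ Icc (0:ℝ) 1, Tendsto (fun i => e i t) l (𝓝 (e' t)) := fun t ht =>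
    (continuous_snd.tendsto _).comp (hlim.tendsto_at ht)
  have hcont : ContinuousOn (fun t => (u' t, e' t)) (Icc 0 1) :=
    hlim.continuousOn (hsol.mono fun _ hi => hi.continuousOn_u.prodMk hi.continuousOn_e).frequently
  have he_nonneg : ∀ t ∈ Icc (0:ℝ) 1, 0 ≤ e' t := fun t ht =>
    ge_of_tendsto (he_lim t ht) (hsol.mono fun _ hi => (hi.2 t ht).2.le)
  have hbar' : ∀ t ∈ Icc (0:ℝ) 1, κ * e' t ≤ u' t := fun t ht =>
    le_of_tendsto_of_tendsto ((he_lim t ht).const_mul κ) (hu_lim t ht)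
      (hbar.mono fun _ hi => hi t ht)
  exact
    { continuousOn_u := continuous_fst.comp_continuousOn hcont
      continuousOn_e := continuous_snd.comp_continuousOn hcont
      u_zero := tendsto_nhds_unique (hu_lim 0 (left_mem_Icc.2 zero_le_one))
        (tendsto_const_nhds.congr' (hsol.mono fun _ hi => hi.1.1.symm))
      e_zero := tendsto_nhds_unique (he_lim 0 (left_mem_Icc.2 zero_le_one))
        (tendsto_const_nhds.congr' (hsol.mono fun _ hi => hi.1.2.1.symm))
      nonneg := fun t ht =>
        have ht' := Ico_subset_Icc_self ht
        ⟨(mul_nonneg hκ.le (he_nonneg t ht')).trans (hbar' t ht'), he_nonneg t ht'⟩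
      pos_of_pos := fun t ht he => (mul_pos hκ he).trans_le (hbar' t (Ico_subset_Icc_self ht))
      hasDerivAt_u := fun _ ht hu => P.hasDerivAt_u_of_tendstoUniformlyOn hc hsol hlim hcont ht hu
      hasDerivAt_e := fun _ ht => P.hasDerivAt_e_of_tendstoUniformlyOn hc hsol hlim hcont ht }

end Limit

theorem exists_isExtendedSol_tendsto (𝒰 : Ultrafilter (ℝ × ℝ)) {c₀ : ℝ × ℝ}
    (h𝒰 : ↑𝒰 ≤ 𝓝[Feasible P.Γ P.α P.ν P.u₀ P.e₀] c₀) {u e : ℝ × ℝ → ℝ → ℝ}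
    (hsol : ∀ c ∈ Feasible P.Γ P.α P.ν P.u₀ P.e₀, P.IsPosSol c (u c) (e c)) :
    ∃ u' e', P.IsExtendedSol c₀ u' e' ∧
      Tendsto (fun c => (u c 1, e c 1)) 𝒰 (𝓝 (u' 1, e' 1)) := by
  obtain ⟨U, E, κ, M, hκ, hb⟩ := P.exists_uniform_bounds (‖c₀‖ + 1)
  have hball : ∀ᶠ c in (𝒰 : Filter (ℝ × ℝ)),
      c ∈ Feasible P.Γ P.α P.ν P.u₀ P.e₀ ∩ closedBall c₀ 1 :=
    h𝒰 (inter_mem_nhdsWithin _ (closedBall_mem_nhds c₀ one_pos))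
  have hnear : ∀ᶠ c in (𝒰 : Filter (ℝ × ℝ)), P.IsPosSol c (u c) (e c) ∧
      ∀ t ∈ Icc (0:ℝ) 1, u c t ≤ U ∧ e c t ≤ E ∧ κ * e c t ≤ u c t ∧
        ‖P.field c (u c t, e c t)‖ ≤ M :=
    hball.mono fun c hc => ⟨hsol c hc.1, hb c (norm_le_of_mem_closedBall hc.2) _ _ (hsol c hc.1)⟩
  obtain ⟨γ, hγ⟩ := exists_tendstoUniformlyOn_of_lipschitzOnWith 𝒰 isCompact_Icc
    (isCompact_Icc.prod isCompact_Icc) (K := Icc 0 U ×ˢ Icc 0 E) (L := M.toNNReal)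
    (f := fun c t => (u c t, e c t))
    (hnear.mono fun c hc t ht =>
      ⟨⟨(hc.1.2 t ht).1.le, (hc.2 t ht).1⟩, ⟨(hc.1.2 t ht).2.le, (hc.2 t ht).2.1⟩⟩)
    (hnear.mono fun c hc => (convex_Icc 0 1).lipschitzOnWith_of_nnnorm_hasDerivWithin_le
      (fun t ht => (hc.1.hasDerivWithinAt_u ht).prodMk (hc.1.hasDerivWithinAt_e ht))
      (fun t ht => by
        rw [← NNReal.coe_le_coe, coe_nnnorm]
        exact (hc.2 t ht).2.2.2.trans (Real.le_coe_toNNReal M)))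
  exact ⟨fun t => (γ t).1, fun t => (γ t).2,
    P.isExtendedSol_of_tendstoUniformlyOn (tendsto_id'.2 (h𝒰.trans nhdsWithin_le_nhds))
      (hnear.mono fun _ hc => hc.1) hκ (hnear.mono fun _ hc t ht => (hc.2 t ht).2.2.1) hγ,
    hγ.tendsto_at (right_mem_Icc.2 zero_le_one)⟩

theorem tendsto_endpoint {u e : ℝ × ℝ → ℝ → ℝ}
    (hsol : ∀ c ∈ Feasible P.Γ P.α P.ν P.u₀ P.e₀, P.IsPosSol c (u c) (e c)) {c₀ : ℝ × ℝ}
    {u₀' e₀' : ℝ → ℝ} (h : P.IsExtendedSol c₀ u₀' e₀') :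
    Tendsto (fun c => (u c 1, e c 1)) (𝓝[Feasible P.Γ P.α P.ν P.u₀ P.e₀] c₀)
      (𝓝 (u₀' 1, e₀' 1)) := by
  rw [tendsto_iff_ultrafilter]
  intro 𝒰 h𝒰
  obtain ⟨u', e', h', hlim⟩ := P.exists_isExtendedSol_tendsto 𝒰 h𝒰 hsol
  have := h'.eqOn h (right_mem_Icc.2 zero_le_one)
  simp only at this
  rwa [this] at hlim

theorem exists_isExtendedSol_of_mem_closure {u e : ℝ × ℝ → ℝ → ℝ}
    (hsol : ∀ c ∈ Feasible P.Γ P.α P.ν P.u₀ P.e₀, P.IsPosSol c (u c) (e c)) {c₀ : ℝ × ℝ}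
    (hc₀ : c₀ ∈ closure (Feasible P.Γ P.α P.ν P.u₀ P.e₀)) :
    ∃ u' e', P.IsExtendedSol c₀ u' e' := by
  have := mem_closure_iff_nhdsWithin_neBot.1 hc₀
  obtain ⟨u', e', h', -⟩ :=
    P.exists_isExtendedSol_tendsto (.of (𝓝[Feasible P.Γ P.α P.ν P.u₀ P.e₀] c₀))
      (Ultrafilter.of_le _) hsol
  exact ⟨u', e', h'⟩

end ProfileParams

/-- Proposition (Psi_C0): the endpoint map `Ψ(c) = (u(1), e(1))` is continuous on 𝒞 and
extends continuously to the closure of 𝒞, taking the value `(u(1), 0)` at boundary points. -/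
theorem stmt5 (Γ α ν u₀ e₀ : ℝ) (hΓ : 0 < Γ) (hα : 0 < α) (hν : 0 < ν)
    (hu₀ : 0 < u₀) (he₀ : 0 < e₀) :
    ∃ Ψ : ℝ × ℝ → ℝ × ℝ,
      ContinuousOn Ψ (closure (Feasible Γ α ν u₀ e₀)) ∧
      (∀ c ∈ Feasible Γ α ν u₀ e₀, ∀ u e : ℝ → ℝ,
        IsProfileSol Γ α ν u₀ e₀ c u e (Set.Icc 0 1) →
        (∀ x ∈ Set.Icc (0:ℝ) 1, 0 < u x ∧ 0 < e x) →
        Ψ c = (u 1, e 1)) ∧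
      (∀ c ∈ frontier (Feasible Γ α ν u₀ e₀), ∀ u e : ℝ → ℝ,
        ContinuousOn u (Set.Icc 0 1) → ContinuousOn e (Set.Icc 0 1) →
        IsProfileSol Γ α ν u₀ e₀ c u e (Set.Ico 0 1) →
        (∀ x ∈ Set.Ico (0:ℝ) 1, 0 < u x ∧ 0 < e x) →
        e 1 = 0 →
        Ψ c = (u 1, 0)) := by
  let P : ProfileParams := ⟨Γ, α, ν, u₀, e₀, hΓ, hα, hν, hu₀, he₀⟩
  choose! u e hsol using fun c (hc : c ∈ Feasible Γ α ν u₀ e₀) => hc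
  refine ⟨extendFrom (Feasible Γ α ν u₀ e₀) fun c => (u c 1, e c 1), ?_, ?_, ?_⟩
  · refine continuousOn_extendFrom subset_rfl fun c hc => ?_
    obtain ⟨u', e', h'⟩ := P.exists_isExtendedSol_of_mem_closure hsol hc
    exact ⟨_, P.tendsto_endpoint hsol h'⟩
  · intro c hc u' e' hs hp
    exact extendFrom_eq (subset_closure hc)
      (P.tendsto_endpoint hsol (ProfileParams.IsPosSol.isExtendedSol (P := P) ⟨hs, hp⟩))
  · intro c hc u' e' hu he hs hp h₁
    rw [← h₁]
    exact extendFrom_eq (frontier_subset_closure hc) (P.tendsto_endpoint hsol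
      (ProfileParams.isExtendedSol_of_isProfileSol (P := P) Ioo_subset_Ico_self hu he hs hp))
end
end

section
/- For every M > 0 there exists R > 0, depending only on Γ, α, ν, u₀, e₀ and M, such that for every c ∈ 𝒞 with |c| ≥ R, the solution (u,e) of the profile ODE on [0,1] satisfies at least one of: u(1) ≥ M, or e(1) ≥ M, or 0 < u(1) ≤ 1/M. -/
open Set

private lemma myAntitone {f f' : ℝ → ℝ} {a b : ℝ}
    (hd : ∀ x ∈ Icc a b, HasDerivWithinAt f (f' x) (Icc a b) x)
    (hneg : ∀ x ∈ Ioo a b, f' x ≤ 0) : AntitoneOn f (Icc a b) := by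
  apply antitoneOn_of_deriv_nonpos (convex_Icc a b)
    (fun x hx => (hd x hx).continuousWithinAt)
  · intro x hx
    rw [interior_Icc] at hx
    exact ((hd x (Ioo_subset_Icc_self hx)).hasDerivAt
      (Icc_mem_nhds hx.1 hx.2)).differentiableAt.differentiableWithinAt
  · intro x hx
    rw [interior_Icc] at hx
    rw [((hd x (Ioo_subset_Icc_self hx)).hasDerivAt (Icc_mem_nhds hx.1 hx.2)).deriv]
    exact hneg x hx

private lemma deriv_le_slope {f f' : ℝ → ℝ} {a b m : ℝ} (hab : a ≤ b)
    (hd : ∀ x ∈ Icc a b, HasDerivWithinAt f (f' x) (Icc a b) x)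
    (hle : ∀ x ∈ Icc a b, f' x ≤ m) : f b ≤ f a + m * (b - a) := by
  have hd' : ∀ x ∈ Icc a b, HasDerivWithinAt (fun y => f y - m * y) (f' x - m) (Icc a b) x := by
    intro x hx
    exact (hd x hx).sub (by simpa using (hasDerivWithinAt_id x (Icc a b)).const_mul m)
  have h := myAntitone hd' (fun x hx => by
    have := hle x (Ioo_subset_Icc_self hx); linarith)
  have := h ⟨le_rfl, hab⟩ ⟨hab, le_rfl⟩ hab
  simp only at this
  linarith

private lemma slope_le_deriv {f f' : ℝ → ℝ} {a b m : ℝ} (hab : a ≤ b)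
    (hd : ∀ x ∈ Icc a b, HasDerivWithinAt f (f' x) (Icc a b) x)
    (hle : ∀ x ∈ Icc a b, m ≤ f' x) : f a + m * (b - a) ≤ f b := by
  have := deriv_le_slope (f := fun y => -f y) (f' := fun y => -f' y) (m := -m) hab
    (fun x hx => (hd x hx).neg) (fun x hx => neg_le_neg (hle x hx))
  linarith

private lemma stays_below {f f' : ℝ → ℝ} {a b m : ℝ} (hab : a ≤ b)
    (hd : ∀ x ∈ Icc a b, HasDerivWithinAt f (f' x) (Icc a b) x)
    (hcond : ∀ x ∈ Icc a b, f x ≤ m → f' x ≤ 0)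
    (ha : f a < m) : ∀ x ∈ Icc a b, f x < m := by
  by_contra h
  push_neg at h
  obtain ⟨x₁, hx₁, hfx₁⟩ := h
  have hax₁ : a ≤ x₁ := hx₁.1
  have hsub : Icc a x₁ ⊆ Icc a b := Icc_subset_Icc le_rfl hx₁.2
  have hcont : ContinuousOn f (Icc a x₁) :=
    fun x hx => ((hd x (hsub hx)).continuousWithinAt).mono hsub
  set S := Icc a x₁ ∩ f ⁻¹' (Ici m) with hS
  have hSclosed : IsClosed S := hcont.preimage_isClosed_of_isClosed isClosed_Icc isClosed_Ici
  have hSne : S.Nonempty := ⟨x₁, ⟨hax₁, le_rfl⟩, hfx₁⟩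
  have hSbdd : BddBelow S := ⟨a, fun y hy => hy.1.1⟩
  set t := sInf S with ht
  have htS : t ∈ S := hSclosed.csInf_mem hSne hSbdd
  have hat : a ≤ t := htS.1.1
  have htx₁ : t ≤ x₁ := htS.1.2
  have hft : m ≤ f t := htS.2
  have hbelow : ∀ y ∈ Ico a t, f y < m := by
    intro y hy
    by_contra hy'
    push_neg at hy'
    exact absurd (csInf_le hSbdd ⟨⟨hy.1, hy.2.le.trans htx₁⟩, hy'⟩) (not_le.mpr hy.2)
  have hsub2 : Icc a t ⊆ Icc a b := Icc_subset_Icc le_rfl (htx₁.trans hx₁.2)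
  have hanti := myAntitone (f := f) (f' := f') (a := a) (b := t)
    (fun x hx => (hd x (hsub2 hx)).mono hsub2)
    (fun x hx => hcond x (hsub2 (Ioo_subset_Icc_self hx))
      (hbelow x ⟨hx.1.le, hx.2⟩).le)
  have := hanti ⟨le_rfl, hat⟩ ⟨hat, le_rfl⟩ hat
  linarith

private lemma trap_below {f f' : ℝ → ℝ} {a b m : ℝ} (hab : a ≤ b)
    (hd : ∀ x ∈ Icc a b, HasDerivWithinAt f (f' x) (Icc a b) x)
    (hcond : ∀ x ∈ Icc a b, m ≤ f x → f' x ≤ 0)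
    (ha : f a ≤ m) : ∀ x ∈ Icc a b, f x ≤ m := by
  by_contra h
  push_neg at h
  obtain ⟨x₁, hx₁, hfx₁⟩ := h
  have hax₁ : a ≤ x₁ := hx₁.1
  have hsub : Icc a x₁ ⊆ Icc a b := Icc_subset_Icc le_rfl hx₁.2
  have hcont : ContinuousOn f (Icc a x₁) :=
    fun x hx => ((hd x (hsub hx)).continuousWithinAt).mono hsub
  set S := Icc a x₁ ∩ f ⁻¹' (Iic m) with hS
  have hSclosed : IsClosed S := hcont.preimage_isClosed_of_isClosed isClosed_Icc isClosed_Iic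
  have hSne : S.Nonempty := ⟨a, ⟨le_rfl, hax₁⟩, ha⟩
  have hSbdd : BddAbove S := ⟨x₁, fun y hy => hy.1.2⟩
  set t := sSup S with ht
  have htS : t ∈ S := hSclosed.csSup_mem hSne hSbdd
  have hat : a ≤ t := htS.1.1
  have htx₁ : t ≤ x₁ := htS.1.2
  have hft : f t ≤ m := htS.2
  have habove : ∀ y ∈ Ioc t x₁, m < f y := by
    intro y hy
    by_contra hy'
    push_neg at hy'
    exact absurd (le_csSup hSbdd ⟨⟨hat.trans hy.1.le, hy.2⟩, hy'⟩) (not_le.mpr hy.1)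
  have hsub2 : Icc t x₁ ⊆ Icc a b := Icc_subset_Icc hat hx₁.2
  have hanti := myAntitone (f := f) (f' := f') (a := t) (b := x₁)
    (fun x hx => (hd x (hsub2 hx)).mono hsub2)
    (fun x hx => hcond x (hsub2 (Ioo_subset_Icc_self hx))
      (habove x ⟨hx.1, hx.2.le⟩).le)
  have := hanti ⟨le_rfl, htx₁⟩ ⟨htx₁, le_rfl⟩ htx₁
  linarith


noncomputable section

set_option maxHeartbeats 1000000 in
/-- Proposition (properprop): Ψ is proper in the sense that for `c ∈ 𝒞` with `|c|` large,
either `u(1)` is large, or `e(1)` is large, or `u(1)` is positive and small. -/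
theorem stmt6 (Γ α ν u₀ e₀ : ℝ) (hΓ : 0 < Γ) (hα : 0 < α) (hν : 0 < ν)
    (hu₀ : 0 < u₀) (he₀ : 0 < e₀) :
    ∀ M > (0:ℝ), ∃ R > (0:ℝ), ∀ c ∈ Feasible Γ α ν u₀ e₀, R ≤ ‖c‖ →
      ∀ u e : ℝ → ℝ,
        IsProfileSol Γ α ν u₀ e₀ c u e (Set.Icc 0 1) →
        (∀ x ∈ Set.Icc (0:ℝ) 1, 0 < u x ∧ 0 < e x) →
        M ≤ u 1 ∨ M ≤ e 1 ∨ (0 < u 1 ∧ u 1 ≤ 1 / M) := by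
  intro M hM
  have hα0 : α ≠ 0 := ne_of_gt hα
  have hν0 : ν ≠ 0 := ne_of_gt hν
  have hu₀0 : u₀ ≠ 0 := ne_of_gt hu₀
  have hM0 : M ≠ 0 := ne_of_gt hM
  set δ := ν * e₀ + α * u₀ ^ 2 / 2 with hδdef
  have hδ : 0 < δ := by positivity
  set K := max (1/α) ((1+Γ)/ν) with hKdef
  have hK : 0 < K := lt_of_lt_of_le (by positivity) (le_max_left (1/α) ((1+Γ)/ν))
  have hK0 : K ≠ 0 := ne_of_gt hK
  set C₂ := K * (δ + 1) + (δ + 1) / u₀ with hC₂def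
  have hC₂ : 0 < C₂ := by positivity
  set B := (ν * M + α * M ^ 2 / 2) / u₀ with hBdef
  have hB : 0 < B := by positivity
  set J := max C₂ B with hJdef
  have hJpos : 0 < J := lt_of_lt_of_le hC₂ (le_max_left C₂ B)
  set D := (δ + J / K) * Real.exp (u₀ * K) with hDdef
  have hD : 0 < D := by positivity
  set U := Real.sqrt (2 * D / α) with hUdef
  have hU : 0 < U := Real.sqrt_pos.mpr (by positivity)
  set E := D / ν with hEdef
  have hE : 0 < E := by positivity
  set R₁ := α * (u₀ + 1) / u₀ + U + Γ * E * M with hR₁def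
  have hR₁ : 0 < R₁ := by positivity
  clear_value δ K C₂ B J D U E R₁
  refine ⟨max (max (α * M / u₀) R₁) J + 1, ?_, ?_⟩
  · have h1 : 0 < α * M / u₀ := by positivity
    have h2 : α * M / u₀ ≤ max (max (α * M / u₀) R₁) J :=
      le_trans (le_max_left _ _) (le_max_left _ _)
    linarith
  intro c hc hR u e hsol hpos
  obtain ⟨hu0, he0, hder⟩ := hsol
  by_contra hcon
  push_neg at hcon
  obtain ⟨hu1M, he1M, hu1m'⟩ := hcon
  have h01 : (0:ℝ) ∈ Icc (0:ℝ) 1 := ⟨le_rfl, zero_le_one⟩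
  have h11 : (1:ℝ) ∈ Icc (0:ℝ) 1 := ⟨zero_le_one, le_rfl⟩
  have hu1pos : 0 < u 1 := (hpos 1 h11).1
  have he1pos : 0 < e 1 := (hpos 1 h11).2
  have hu1m : 1/M < u 1 := hu1m' hu1pos
  -- derivative of u
  have hud : ∀ x ∈ Icc (0:ℝ) 1,
      HasDerivWithinAt u ((u₀ / α) * (c.1 + u x + Γ * e x / u x)) (Icc 0 1) x :=
    fun x hx => (hder x hx).1
  -- the energy function F and its derivative FD
  set F := fun x => ν * e x + α * (u x) ^ 2 / 2 with hFdef
  set FD := fun x => u₀ * (c.2 + (u x) ^ 2 / 2 + (1 + Γ) * e x) with hFDdef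
  clear_value F FD
  have hFder : ∀ x ∈ Icc (0:ℝ) 1, HasDerivWithinAt F (FD x) (Icc 0 1) x := by
    intro x hx
    have hux : (0:ℝ) < u x := (hpos x hx).1
    have hux0 : u x ≠ 0 := ne_of_gt hux
    have h := (((hder x hx).2).const_mul ν).add
      ((((hder x hx).1).pow 2).const_mul α |>.div_const 2)
    rw [hFdef]
    convert h using 1
    · rfl
    · rfl
    · rfl
    simp only [hFDdef]
    field_simp
    ring
  have hFpos : ∀ x ∈ Icc (0:ℝ) 1, 0 < F x := by
    intro x hx
    have h1 := (hpos x hx).1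
    have h2 := (hpos x hx).2
    simp only [hFdef]
    positivity
  have hF0 : F 0 = δ := by simp only [hFdef]; rw [hu0, he0, hδdef]
  have hKF : ∀ x ∈ Icc (0:ℝ) 1, (u x) ^ 2 / 2 + (1 + Γ) * e x ≤ K * F x := by
    intro x hx
    have hex := (hpos x hx).2
    have k1 : 1 ≤ K * α := by
      rw [hKdef]
      exact (div_le_iff₀ hα).mp (le_max_left (1/α) ((1+Γ)/ν))
    have k2 : 1 + Γ ≤ K * ν := by
      rw [hKdef]
      exact (div_le_iff₀ hν).mp (le_max_right (1/α) ((1+Γ)/ν))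
    simp only [hFdef]
    nlinarith [sq_nonneg (u x), mul_nonneg (sub_nonneg.mpr k1) (sq_nonneg (u x)),
      mul_nonneg (sub_nonneg.mpr k2) hex.le]
  -- lower bound on c.2
  have hc2low : -C₂ < c.2 := by
    by_contra h
    push_neg at h
    have hcnd : ∀ x ∈ Icc (0:ℝ) 1, F x ≤ δ + 1 → FD x ≤ -(δ + 1) := by
      intro x hx hFx
      have h1 := hKF x hx
      have hKδ : (u x) ^ 2 / 2 + (1 + Γ) * e x ≤ K * (δ + 1) :=
        le_trans h1 (mul_le_mul_of_nonneg_left hFx hK.le)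
      have m1 := mul_le_mul_of_nonneg_left h hu₀.le
      have m2 := mul_le_mul_of_nonneg_left hKδ hu₀.le
      have h3 : u₀ * C₂ = u₀ * (K * (δ + 1)) + (δ + 1) := by
        rw [hC₂def]; field_simp
      simp only [hFDdef]
      linarith [m1, m2, h3]
    have hlt := stays_below (f := F) (f' := FD) (a := 0) (b := 1) zero_le_one hFder
      (fun x hx hFx => (hcnd x hx hFx).trans (by linarith)) (by rw [hF0]; linarith)
    have hslope := deriv_le_slope zero_le_one hFder (fun x hx => hcnd x hx (hlt x hx).le)
    have hF1 := hFpos 1 h11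
    rw [hF0] at hslope
    linarith
  -- upper bound on c.2
  have hFD_ge : ∀ x ∈ Icc (0:ℝ) 1, u₀ * c.2 ≤ FD x := by
    intro x hx
    have hex := (hpos x hx).2
    have h1 : (0:ℝ) ≤ (u x) ^ 2 / 2 + (1 + Γ) * e x := by positivity
    simp only [hFDdef]
    linarith [mul_le_mul_of_nonneg_left h1 hu₀.le]
  have hs3 := slope_le_deriv zero_le_one hFder hFD_ge
  have hF1lt : F 1 < ν * M + α * M ^ 2 / 2 := by
    simp only [hFdef]
    have q1 : u 1 ^ 2 < M ^ 2 := by nlinarith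
    have q2 : α * u 1 ^ 2 < α * M ^ 2 := (mul_lt_mul_iff_right₀ hα).mpr q1
    have q3 : ν * e 1 < ν * M := (mul_lt_mul_iff_right₀ hν).mpr he1M
    linarith
  have hc2up : c.2 ≤ B := by
    rw [hBdef, le_div_iff₀ hu₀]
    rw [hF0] at hs3
    linarith [hs3, hF1lt, hδ]
  have hc2J : c.2 ≤ J := le_trans hc2up (hJdef ▸ le_max_right C₂ B)
  have hc2abs : |c.2| ≤ J := abs_le.mpr
    ⟨le_trans (neg_le_neg (hJdef ▸ le_max_left C₂ B)) hc2low.le, hc2J⟩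
  -- Gronwall-type bound: F ≤ D on [0,1]
  set G := fun x => (F x + J / K) * Real.exp (-(u₀ * K) * x) with hGdef
  set GD := fun x => FD x * Real.exp (-(u₀ * K) * x) +
    (F x + J / K) * (-(u₀ * K) * Real.exp (-(u₀ * K) * x)) with hGDdef
  clear_value G GD
  have hGder : ∀ x ∈ Icc (0:ℝ) 1, HasDerivWithinAt G (GD x) (Icc 0 1) x := by
    intro x hx
    have h1 : HasDerivAt (fun y : ℝ => -(u₀ * K) * y) (-(u₀ * K)) x := by
      simpa using (hasDerivAt_id x).const_mul (-(u₀ * K))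
    have hexp : HasDerivWithinAt (fun y => Real.exp (-(u₀ * K) * y))
        (-(u₀ * K) * Real.exp (-(u₀ * K) * x)) (Icc 0 1) x := by
      have h2 := (h1.exp).hasDerivWithinAt (s := Icc (0:ℝ) 1)
      convert h2 using 1
      · rfl
      · rfl
      ring
    rw [hGdef, hGDdef]
    exact ((hFder x hx).add_const (J / K)).mul hexp
  have hGD : ∀ x ∈ Icc (0:ℝ) 1, GD x ≤ 0 := by
    intro x hx
    have hKFx := hKF x hx
    have hexpos : 0 < Real.exp (-(u₀ * K) * x) := Real.exp_pos _
    have hkey : FD x - u₀ * K * F x - u₀ * J ≤ 0 := by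
      have m2 := mul_le_mul_of_nonneg_left hKFx hu₀.le
      have m1 := mul_le_mul_of_nonneg_left hc2J hu₀.le
      simp only [hFDdef]
      linarith [m1, m2]
    have heq : GD x = Real.exp (-(u₀ * K) * x) * (FD x - u₀ * K * F x - u₀ * (K * (J / K))) := by
      simp only [hGDdef]; ring
    have hJK : K * (J / K) = J := by field_simp
    rw [heq, hJK]
    exact mul_nonpos_of_nonneg_of_nonpos hexpos.le hkey
  have hGanti := myAntitone hGder (fun x hx => hGD x (Ioo_subset_Icc_self hx))
  have hF_bound : ∀ x ∈ Icc (0:ℝ) 1, F x ≤ D := by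
    intro x hx
    have h1 : G x ≤ G 0 := hGanti h01 hx hx.1
    have hG0 : G 0 = δ + J / K := by
      simp only [hGdef]
      rw [hF0, mul_zero, Real.exp_zero, mul_one]
    rw [hG0] at h1
    simp only [hGdef] at h1
    have hEpos : (0:ℝ) < Real.exp (u₀ * K * x) := Real.exp_pos _
    have h2 : F x + J / K ≤ (δ + J / K) * Real.exp (u₀ * K * x) := by
      have h3 := mul_le_mul_of_nonneg_right h1 hEpos.le
      rwa [mul_assoc, ← Real.exp_add, neg_mul, neg_add_cancel, Real.exp_zero, mul_one] at h3
    have h4 : Real.exp (u₀ * K * x) ≤ Real.exp (u₀ * K) := by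
      apply Real.exp_le_exp.mpr
      exact mul_le_of_le_one_right (mul_pos hu₀ hK).le hx.2
    have h5 : (δ + J / K) * Real.exp (u₀ * K * x) ≤ D := by
      rw [hDdef]
      exact mul_le_mul_of_nonneg_left h4 (by positivity)
    have h6 : (0:ℝ) ≤ J / K := by positivity
    linarith
  have hu_le : ∀ x ∈ Icc (0:ℝ) 1, u x ≤ U := by
    intro x hx
    have h1 := hF_bound x hx
    simp only [hFdef] at h1
    have hex := (hpos x hx).2
    have hux := (hpos x hx).1
    rw [hUdef, show u x = Real.sqrt ((u x) ^ 2) from (Real.sqrt_sq hux.le).symm]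
    apply Real.sqrt_le_sqrt
    rw [le_div_iff₀ hα]
    linarith [mul_pos hν hex]
  have he_le : ∀ x ∈ Icc (0:ℝ) 1, e x ≤ E := by
    intro x hx
    have h1 := hF_bound x hx
    simp only [hFdef] at h1
    rw [hEdef, le_div_iff₀ hν]
    linarith [mul_nonneg hα.le (sq_nonneg (u x))]
  -- upper bound on c.1
  have hc1up : c.1 ≤ α * M / u₀ := by
    have hlow : ∀ x ∈ Icc (0:ℝ) 1, (u₀ / α) * c.1 ≤ (u₀ / α) * (c.1 + u x + Γ * e x / u x) := by
      intro x hx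
      have hux := (hpos x hx).1
      have hex := (hpos x hx).2
      have h1 : 0 < Γ * e x / u x := by positivity
      have h2 : c.1 ≤ c.1 + u x + Γ * e x / u x := by linarith
      exact mul_le_mul_of_nonneg_left h2 (by positivity)
    have hs := slope_le_deriv zero_le_one hud hlow
    rw [hu0] at hs
    have hsM : (u₀ / α) * c.1 < M := by linarith [hs, hu1M, hu₀]
    have key : α * ((u₀ / α) * c.1) = u₀ * c.1 := by field_simp
    have h7 := mul_lt_mul_of_pos_left hsM hα
    rw [key] at h7
    rw [le_div_iff₀ hu₀]
    linarith
  -- lower bound on c.1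
  have hc1low : -R₁ < c.1 := by
    by_contra h
    push_neg at h
    have hMinv : (0:ℝ) < 1 / M := by positivity
    have hcnd : ∀ x ∈ Icc (0:ℝ) 1, 1 / M ≤ u x →
        (u₀ / α) * (c.1 + u x + Γ * e x / u x) ≤ -(u₀ + 1) := by
      intro x hx hxu
      have hux := (hpos x hx).1
      have hex := (hpos x hx).2
      have hdivM : e x / u x ≤ E * M := by
        have hdd := div_le_div₀ hE.le (he_le x hx) hMinv hxu
        have hEM : E / (1 / M) = E * M := by field_simp
        rwa [hEM] at hdd
      have h3 : Γ * e x / u x ≤ Γ * (E * M) := by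
        rw [mul_div_assoc]
        exact mul_le_mul_of_nonneg_left hdivM hΓ.le
      have h4 := hu_le x hx
      have h2 : c.1 + u x + Γ * e x / u x ≤ -(α * (u₀ + 1) / u₀) := by
        rw [hR₁def] at h
        linarith
      calc (u₀ / α) * (c.1 + u x + Γ * e x / u x)
          ≤ (u₀ / α) * (-(α * (u₀ + 1) / u₀)) := mul_le_mul_of_nonneg_left h2 (by positivity)
        _ = -(u₀ + 1) := by field_simp
    by_cases hall : ∀ x ∈ Icc (0:ℝ) 1, 1 / M ≤ u x
    · have hds := deriv_le_slope zero_le_one hud (fun x hx => hcnd x hx (hall x hx))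
      rw [hu0] at hds
      linarith [hu1pos]
    · push_neg at hall
      obtain ⟨x₀, hx₀, hx₀u⟩ := hall
      have hsub : Icc x₀ 1 ⊆ Icc (0:ℝ) 1 := Icc_subset_Icc hx₀.1 le_rfl
      have htrap := trap_below (a := x₀) (b := 1) (m := 1 / M) hx₀.2
        (fun x hx => (hud x (hsub hx)).mono hsub)
        (fun x hx hxu => (hcnd x (hsub hx) hxu).trans (by linarith))
        hx₀u.le
      have h1 := htrap 1 ⟨hx₀.2, le_rfl⟩
      linarith [hu1m]
  -- conclusion
  have hnorm : ‖c‖ ≤ max (max (α * M / u₀) R₁) J := by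
    rw [Prod.norm_def]
    apply max_le
    · rw [Real.norm_eq_abs]
      refine le_trans (abs_le.mpr ⟨?_, ?_⟩) (le_max_left _ _)
      · exact le_trans (neg_le_neg (le_max_right (α * M / u₀) R₁)) hc1low.le
      · exact le_trans hc1up (le_max_left (α * M / u₀) R₁)
    · rw [Real.norm_eq_abs]
      exact le_trans hc2abs (le_max_right _ _)
  linarith [hR, hnorm]
end
end

section
/- There exists a constant A > 0, depending only on Γ, α, ν, u₀, e₀, such that for every c = (c₁, c₂) ∈ ℝ² with c₂ ≤ −A, one has c ∉ 𝒞; that is, the maximal solution of the profile ODE for such c does not remain defined with u > 0 and e > 0 on all of [0,1]. -/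
/-!
The energy `G = ν e + α u² / 2` satisfies `G' = u₀ (c₂ + u² / 2 + (1 + Γ) e)` along the flow: the
`c₁`-terms cancel. While `e ≥ 0` we have `u² / 2 + (1 + Γ) e ≤ K G` with `K = max (1/α) ((1+Γ)/ν)`,
so `G' ≤ u₀ K G + u₀ c₂` and Grönwall gives `G 1 ≤ G 0 · exp (u₀ K) + u₀ c₂`. This is `≤ 0` once
`c₂ ≤ -G 0 · exp (u₀ K) / u₀`, whereas `G 1 > 0` if the solution stays positive on `[0, 1]`.
-/

noncomputable section

open Set Real

def profileEnergy (α ν : ℝ) (u e : ℝ → ℝ) (x : ℝ) : ℝ :=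
  ν * e x + α * u x ^ 2 / 2

lemma profileEnergy_pos {α ν : ℝ} {u e : ℝ → ℝ} {x : ℝ} (hα : 0 < α) (hν : 0 < ν)
    (he : 0 < e x) : 0 < profileEnergy α ν u e x := by
  unfold profileEnergy
  positivity

lemma sq_half_add_mul_le_max_mul {α ν : ℝ} (Γ u : ℝ) {e : ℝ} (hα : 0 < α) (hν : 0 < ν)
    (he : 0 ≤ e) :
    u ^ 2 / 2 + (1 + Γ) * e ≤ max (1 / α) ((1 + Γ) / ν) * (ν * e + α * u ^ 2 / 2) :=
  calc u ^ 2 / 2 + (1 + Γ) * e = 1 / α * (α * u ^ 2 / 2) + (1 + Γ) / ν * (ν * e) := by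
        field_simp
    _ ≤ max (1 / α) ((1 + Γ) / ν) * (α * u ^ 2 / 2) + max (1 / α) ((1 + Γ) / ν) * (ν * e) := by
        gcongr
        exacts [le_max_left _ _, le_max_right _ _]
    _ = max (1 / α) ((1 + Γ) / ν) * (ν * e + α * u ^ 2 / 2) := by ring

lemma gronwallBound_le_add_mul_of_nonpos {δ K ε x : ℝ} (hK : 0 < K) (hε : ε ≤ 0) :
    gronwallBound δ K ε x ≤ δ * exp (K * x) + ε * x := by
  rw [gronwallBound_of_K_ne_0 hK.ne']
  have hexp : K * x ≤ exp (K * x) - 1 := by linarith [add_one_le_exp (K * x)]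
  have hεK : ε / K ≤ 0 := div_nonpos_of_nonpos_of_nonneg hε hK.le
  calc δ * exp (K * x) + ε / K * (exp (K * x) - 1) ≤ δ * exp (K * x) + ε / K * (K * x) :=
        add_le_add_right (mul_le_mul_of_nonpos_left hexp hεK) _
    _ = δ * exp (K * x) + ε * x := by field_simp

namespace IsProfileSol

variable {Γ α ν u₀ e₀ : ℝ} {c : ℝ × ℝ} {u e : ℝ → ℝ} {S : Set ℝ}

lemma profileEnergy_zero (h : IsProfileSol Γ α ν u₀ e₀ c u e S) :
    profileEnergy α ν u e 0 = ν * e₀ + α * u₀ ^ 2 / 2 := by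
  rw [profileEnergy, h.1, h.2.1]

lemma hasDerivWithinAt_profileEnergy (hα : α ≠ 0) (hν : ν ≠ 0)
    (h : IsProfileSol Γ α ν u₀ e₀ c u e S) {x : ℝ} (hx : x ∈ S) (hux : u x ≠ 0) :
    HasDerivWithinAt (profileEnergy α ν u e) (u₀ * (c.2 + u x ^ 2 / 2 + (1 + Γ) * e x)) S x := by
  obtain ⟨hu', he'⟩ := h.2.2 x hx
  refine ((he'.const_mul ν).add (((hu'.pow 2).const_mul α).div_const 2)).congr_deriv ?_
  field_simp
  ring

lemma profileEnergy_le_gronwallBound (hα : 0 < α) (hν : 0 < ν) (hu₀ : 0 ≤ u₀)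
    (h : IsProfileSol Γ α ν u₀ e₀ c u e (Icc 0 1))
    (hpos : ∀ x ∈ Icc (0 : ℝ) 1, 0 < u x ∧ 0 < e x) :
    ∀ x ∈ Icc (0 : ℝ) 1, profileEnergy α ν u e x ≤
      gronwallBound (ν * e₀ + α * u₀ ^ 2 / 2) (u₀ * max (1 / α) ((1 + Γ) / ν)) (u₀ * c.2) x := by
  have hderiv : ∀ x ∈ Icc (0 : ℝ) 1, HasDerivWithinAt (profileEnergy α ν u e)
      (u₀ * (c.2 + u x ^ 2 / 2 + (1 + Γ) * e x)) (Icc 0 1) x := fun x hx =>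
    h.hasDerivWithinAt_profileEnergy hα.ne' hν.ne' hx (hpos x hx).1.ne'
  intro x hx
  simpa only [sub_zero] using le_gronwallBound_of_liminf_deriv_right_le
    (fun x hx => (hderiv x hx).continuousWithinAt)
    (fun x hx _ hr => ((hderiv x (Ico_subset_Icc_self hx)).mono_of_mem_nhdsWithin
      (Icc_mem_nhdsGE_of_mem hx)).liminf_right_slope_le hr)
    h.profileEnergy_zero.le
    (fun y hy => by
      have hquad := sq_half_add_mul_le_max_mul Γ (u y) hα hν (hpos y (Ico_subset_Icc_self hy)).2.le
      have := mul_le_mul_of_nonneg_left hquad hu₀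
      rw [profileEnergy]
      linarith)
    x hx

end IsProfileSol

theorem stmt7_general (Γ α ν u₀ e₀ : ℝ) (hα : 0 < α) (hν : 0 < ν)
    (hu₀ : 0 < u₀) (he₀ : 0 < e₀) :
    ∃ A > (0:ℝ), ∀ c : ℝ × ℝ, c.2 ≤ -A → c ∉ Feasible Γ α ν u₀ e₀ := by
  set K := max (1 / α) ((1 + Γ) / ν)
  set G₀ := ν * e₀ + α * u₀ ^ 2 / 2
  have hK : 0 < K := lt_max_of_lt_left (by positivity)
  refine ⟨G₀ * exp (u₀ * K) / u₀, by positivity, fun c hc ⟨u, e, hsol, hpos⟩ => ?_⟩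
  have hc' : u₀ * c.2 ≤ -(G₀ * exp (u₀ * K)) :=
    calc u₀ * c.2 ≤ u₀ * -(G₀ * exp (u₀ * K) / u₀) := by gcongr
      _ = -(G₀ * exp (u₀ * K)) := by field_simp
  have hG₁ : 0 < profileEnergy α ν u e 1 :=
    profileEnergy_pos hα hν (hpos 1 (right_mem_Icc.2 zero_le_one)).2
  have hG₁_le := hsol.profileEnergy_le_gronwallBound hα hν hu₀.le hpos 1
    (right_mem_Icc.2 zero_le_one)
  have hbound := gronwallBound_le_add_mul_of_nonpos (x := 1) (δ := G₀) (mul_pos hu₀ hK)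
    (hc'.trans (neg_nonpos.2 (by positivity)))
  rw [mul_one, mul_one] at hbound
  linarith

/-- There is `A > 0` depending only on `Γ, α, ν, u₀, e₀` such that `c₂ ≤ -A` implies `c ∉ 𝒞`. -/
theorem stmt7 (Γ α ν u₀ e₀ : ℝ) (hΓ : 0 < Γ) (hα : 0 < α) (hν : 0 < ν)
    (hu₀ : 0 < u₀) (he₀ : 0 < e₀) :
    ∃ A > (0:ℝ), ∀ c : ℝ × ℝ, c.2 ≤ -A → c ∉ Feasible Γ α ν u₀ e₀ :=
  stmt7_general Γ α ν u₀ e₀ hα hν hu₀ he₀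
end
end
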